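/- arXiv:2103.06174 — 8 statements merged into one kernel-verified Lean document; each statement's English description precedes it below -/
import Mathlib

section
/- Let n be a positive integer and let a_1, ..., a_n and b_1, ..., b_n be nonnegative real numbers. Then ∏_{t=1}^n (a_t + b_t) ≥ ∏_{t=1}^n a_t + ∏_{t=1}^n b_t + (2^n − 2) · (∏_{t=1}^n a_t b_t)^{1/2}. -/
lemma two_sqrt_le {x y : ℝ} (hx : 0 ≤ x) (hy : 0 ≤ y) :
    2 * Real.sqrt (x * y) ≤ x + y := by
  rw [Real.sqrt_mul hx]
  nlinarith [sq_nonneg (Real.sqrt x - Real.sqrt y), Real.sq_sqrt hx, Real.sq_sqrt hy,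
    Real.sqrt_nonneg x, Real.sqrt_nonneg y]

lemma prod_add_aux : ∀ n (a b : Fin (n + 1) → ℝ), (∀ t, 0 ≤ a t) → (∀ t, 0 ≤ b t) →
    ∏ t, a t + ∏ t, b t + ((2 : ℝ) ^ (n + 1) - 2) * Real.sqrt (∏ t, a t * b t) ≤
      ∏ t, (a t + b t) := by
  intro n
  induction n with
  | zero =>
    intro a b ha hb
    simp
  | succ n ih =>
    intro a b ha hb
    have ih' := ih (fun t => a t.succ) (fun t => b t.succ) (fun t => ha _) (fun t => hb _)
    rw [Fin.prod_univ_succ a, Fin.prod_univ_succ b, Fin.prod_univ_succ (fun t => a t * b t),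
      Fin.prod_univ_succ (fun t => a t + b t)]
    set x := a 0 with hxdef
    set y := b 0 with hydef
    set A := ∏ t : Fin (n+1), a t.succ with hAdef
    set B := ∏ t : Fin (n+1), b t.succ with hBdef
    set Q := ∏ t : Fin (n+1), a t.succ * b t.succ with hQdef
    set T := ∏ t : Fin (n+1), (a t.succ + b t.succ) with hTdef
    have hx : 0 ≤ x := ha 0
    have hy : 0 ≤ y := hb 0
    have hA : 0 ≤ A := Finset.prod_nonneg fun t _ => ha _
    have hB : 0 ≤ B := Finset.prod_nonneg fun t _ => hb _
    have hQ : 0 ≤ Q := Finset.prod_nonneg fun t _ => mul_nonneg (ha _) (hb _)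
    have hQAB : Q = A * B := by
      rw [hQdef, hAdef, hBdef, Finset.prod_mul_distrib]
    have hsplit : Real.sqrt (x * y * Q) = Real.sqrt (x * y) * Real.sqrt Q :=
      Real.sqrt_mul (mul_nonneg hx hy) Q
    have hsQ : 0 ≤ Real.sqrt Q := Real.sqrt_nonneg _
    have hsxy : 0 ≤ Real.sqrt (x * y) := Real.sqrt_nonneg _
    -- AM-GM: x + y ≥ 2√(xy)
    have h1 : 2 * Real.sqrt (x * y) ≤ x + y := two_sqrt_le hx hy
    -- AM-GM: xB + yA ≥ 2√(xy)√Q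
    have h2 : 2 * (Real.sqrt (x * y) * Real.sqrt Q) ≤ x * B + y * A := by
      have := two_sqrt_le (mul_nonneg hx hB) (mul_nonneg hy hA)
      have heq : Real.sqrt (x * B * (y * A)) = Real.sqrt (x * y) * Real.sqrt Q := by
        rw [← hsplit, hQAB]; ring_nf
      linarith [this, heq ▸ this]
    have hc : (0 : ℝ) ≤ (2 : ℝ) ^ (n + 1) - 2 := by
      have : (2 : ℝ) ^ 1 ≤ (2 : ℝ) ^ (n + 1) :=
        pow_le_pow_right₀ (by norm_num) (by omega)
      simpa using this
    have hxy : 0 ≤ x + y := add_nonneg hx hy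
    have hmul : (x + y) * (A + B + ((2 : ℝ) ^ (n + 1) - 2) * Real.sqrt Q) ≤ (x + y) * T :=
      mul_le_mul_of_nonneg_left ih' hxy
    have hpow : (2 : ℝ) ^ (n + 1 + 1) = 2 * (2 : ℝ) ^ (n + 1) := by ring
    rw [hsplit, hpow]
    nlinarith [mul_le_mul_of_nonneg_right h1 (mul_nonneg hc hsQ), hmul, h2,
      mul_nonneg hc hsQ]

theorem prod_add_ge (n : ℕ) (hn : 0 < n) (a b : Fin n → ℝ)
    (ha : ∀ t, 0 ≤ a t) (hb : ∀ t, 0 ≤ b t) :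
    ∏ t, (a t + b t) ≥
      ∏ t, a t + ∏ t, b t + ((2 : ℝ) ^ n - 2) * Real.sqrt (∏ t, a t * b t) := by
  obtain ⟨m, rfl⟩ := Nat.exists_eq_succ_of_ne_zero hn.ne'
  simpa using prod_add_aux m a b ha hb
end

section
/- Let n be a positive integer and let x, y ≥ 0 be real numbers. Then (x^{1/n} + y^{1/n})^n ≥ x + y + (2^n − 2) · (xy)^{1/2}. -/
theorem pow_nth_root_add (n : ℕ) (hn : 0 < n) (x y : ℝ) (hx : 0 ≤ x) (hy : 0 ≤ y) :
    (x ^ ((n : ℝ)⁻¹) + y ^ ((n : ℝ)⁻¹)) ^ n ≥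
      x + y + ((2 : ℝ) ^ n - 2) * Real.sqrt (x * y) := by
  set a := x ^ ((n : ℝ)⁻¹) with ha_def
  set b := y ^ ((n : ℝ)⁻¹) with hb_def
  have ha : 0 ≤ a := Real.rpow_nonneg hx _
  have hb : 0 ≤ b := Real.rpow_nonneg hy _
  have han : a ^ n = x := Real.rpow_inv_natCast_pow hx hn.ne'
  have hbn : b ^ n = y := Real.rpow_inv_natCast_pow hy hn.ne'
  set s := Real.sqrt (a * b) with hs_def
  have hs : 0 ≤ s := Real.sqrt_nonneg _
  have hs2 : s ^ 2 = a * b := Real.sq_sqrt (mul_nonneg ha hb)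
  have hab : a ^ n * b ^ n = (s ^ n) ^ 2 := by
    rw [← pow_mul, mul_comm n 2, pow_mul, hs2, mul_pow]
  have hxy : Real.sqrt (x * y) = s ^ n := by
    rw [← han, ← hbn, hab, Real.sqrt_sq (pow_nonneg hs n)]
  rw [hxy, ← han, ← hbn]
  -- binomial expansion
  rw [ge_iff_le, add_pow]
  let f : ℕ → ℝ := fun k => a ^ k * b ^ (n - k) * (n.choose k : ℝ)
  have hf : f = fun k => a ^ k * b ^ (n - k) * (n.choose k : ℝ) := rfl
  show a ^ n + b ^ n + (2 ^ n - 2) * s ^ n ≤ ∑ m ∈ Finset.range (n + 1), f m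
  have hsplit : Finset.range (n + 1) = insert 0 (insert n (Finset.Ioo 0 n)) := by
    ext k; simp [Finset.mem_Ioo]; omega
  have h0 : (0 : ℕ) ∉ insert n (Finset.Ioo 0 n) := by simp; omega
  have hnn : n ∉ Finset.Ioo 0 n := by simp
  rw [hsplit, Finset.sum_insert h0, Finset.sum_insert hnn]
  have hf0 : f 0 = b ^ n := by simp [hf]
  have hfn : f n = a ^ n := by simp [hf]
  rw [hf0, hfn]
  -- reflection
  have hrefl : ∑ k ∈ Finset.Ioo 0 n, f k = ∑ k ∈ Finset.Ioo 0 n, f (n - k) := by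
    apply Finset.sum_nbij' (fun k => n - k) (fun k => n - k)
    · intro k hk; simp [Finset.mem_Ioo] at *; omega
    · intro k hk; simp [Finset.mem_Ioo] at *; omega
    · intro k hk; simp [Finset.mem_Ioo] at hk; omega
    · intro k hk; simp [Finset.mem_Ioo] at hk; omega
    · intro k hk; simp [Finset.mem_Ioo] at hk
      congr 1; omega
  -- pointwise bound on doubled sum
  have hkey : ∀ k ∈ Finset.Ioo 0 n, 2 * ((n.choose k : ℝ) * s ^ n) ≤ f k + f (n - k) := by
    intro k hk
    simp only [Finset.mem_Ioo] at hk
    have hkn : n - (n - k) = k := by omega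
    have hch : (n.choose (n - k) : ℝ) = (n.choose k : ℝ) := by
      rw [Nat.choose_symm hk.2.le]
    simp only [hf, hkn, hch]
    have h1 : k + (n - k) = n := by omega
    have h2 : (n - k) + k = n := by omega
    have huv : (a ^ k * b ^ (n - k)) * (a ^ (n - k) * b ^ k) = (s ^ n) ^ 2 := by
      calc (a ^ k * b ^ (n - k)) * (a ^ (n - k) * b ^ k)
          = a ^ (k + (n - k)) * b ^ ((n - k) + k) := by rw [pow_add, pow_add]; ring
        _ = a ^ n * b ^ n := by rw [h1, h2]
        _ = (s ^ n) ^ 2 := hab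
    have hu : 0 ≤ a ^ k * b ^ (n - k) := by positivity
    have hv : 0 ≤ a ^ (n - k) * b ^ k := by positivity
    have hsn : 0 ≤ s ^ n := by positivity
    have h2 : 2 * s ^ n ≤ a ^ k * b ^ (n - k) + a ^ (n - k) * b ^ k := by
      nlinarith [sq_nonneg (a ^ k * b ^ (n - k) - a ^ (n - k) * b ^ k),
        sq_nonneg (a ^ k * b ^ (n - k) + a ^ (n - k) * b ^ k - 2 * s ^ n)]
    have hc : (0 : ℝ) ≤ (n.choose k : ℝ) := Nat.cast_nonneg _
    calc 2 * ((n.choose k : ℝ) * s ^ n) = (n.choose k : ℝ) * (2 * s ^ n) := by ring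
      _ ≤ (n.choose k : ℝ) * (a ^ k * b ^ (n - k) + a ^ (n - k) * b ^ k) := by
          exact mul_le_mul_of_nonneg_left h2 hc
      _ = a ^ k * b ^ (n - k) * (n.choose k : ℝ) + a ^ (n - k) * b ^ k * (n.choose k : ℝ) := by
          ring
  have hchsum : ∑ k ∈ Finset.Ioo 0 n, (n.choose k : ℝ) = 2 ^ n - 2 := by
    have := Nat.sum_range_choose n
    have h2 : ∑ k ∈ Finset.range (n + 1), (n.choose k : ℝ) = 2 ^ n := by
      exact_mod_cast congrArg (Nat.cast : ℕ → ℝ) this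
    rw [hsplit, Finset.sum_insert h0, Finset.sum_insert hnn] at h2
    simp at h2
    linarith
  have hM : (2 ^ n - 2) * s ^ n ≤ ∑ k ∈ Finset.Ioo 0 n, f k := by
    have hd : 2 * ∑ k ∈ Finset.Ioo 0 n, f k = ∑ k ∈ Finset.Ioo 0 n, (f k + f (n - k)) := by
      rw [Finset.sum_add_distrib, ← hrefl]; ring
    have : ∑ k ∈ Finset.Ioo 0 n, 2 * ((n.choose k : ℝ) * s ^ n)
        ≤ ∑ k ∈ Finset.Ioo 0 n, (f k + f (n - k)) := Finset.sum_le_sum hkey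
    rw [← hd] at this
    have hl : ∑ k ∈ Finset.Ioo 0 n, 2 * ((n.choose k : ℝ) * s ^ n)
        = 2 * ((2 ^ n - 2) * s ^ n) := by
      calc ∑ k ∈ Finset.Ioo 0 n, 2 * ((n.choose k : ℝ) * s ^ n)
          = (∑ k ∈ Finset.Ioo 0 n, (n.choose k : ℝ)) * (2 * s ^ n) := by
            rw [Finset.sum_mul]; exact Finset.sum_congr rfl fun _ _ => by ring
        _ = 2 * ((2 ^ n - 2) * s ^ n) := by rw [hchsum]; ring
    linarith [hl ▸ this]
  linarith
end

section
/- Let A and B be n×n complex positive semidefinite matrices. Then det(A + B) ≥ det A + det B + (2^n − 2) · (det A · det B)^{1/2}, where all determinants are nonnegative real numbers. -/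
/-!
If `A` is invertible, write `A = S²` with `S = √A` and `C = S⁻¹ B S⁻¹ ⪰ 0` with eigenvalues `μᵢ ≥ 0`.
Then `det (A + B) = det A · ∏ (1 + μᵢ)` and `det B = det A · ∏ μᵢ`, so it suffices that
`∏ (1 + μᵢ) ≥ 1 + ∏ μᵢ + (2ⁿ - 2) √(∏ μᵢ)`. Expand the left side as `∑ₜ ∏_{i ∈ t} μᵢ` over all
subsets `t`: the terms `t = ∅, univ` give `1 + ∏ μᵢ`, and pairing every other `t` with `tᶜ`, AM-GM
bounds each pair below by `2 √(∏ μᵢ)`. If neither `A` nor `B` is invertible, the right side is `0`.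
-/

open Matrix Finset
open scoped ComplexOrder

theorem two_mul_sqrt_mul_le_add {x y : ℝ} (hx : 0 ≤ x) (hy : 0 ≤ y) :
    2 * √(x * y) ≤ x + y := by
  have := two_mul_le_add_sq √x √y
  rwa [Real.sq_sqrt hx, Real.sq_sqrt hy, mul_assoc, ← Real.sqrt_mul hx] at this

theorem two_mul_sqrt_prod_le_prod_add_prod_compl {ι : Type*} [Fintype ι] [DecidableEq ι]
    {μ : ι → ℝ} (hμ : ∀ i, 0 ≤ μ i) (t : Finset ι) :
    2 * √(∏ i, μ i) ≤ ∏ i ∈ t, μ i + ∏ i ∈ tᶜ, μ i := by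
  rw [← prod_mul_prod_compl t μ]
  exact two_mul_sqrt_mul_le_add (prod_nonneg fun i _ => hμ i) (prod_nonneg fun i _ => hμ i)

theorem one_add_prod_add_mul_sqrt_prod_le_prod_one_add {ι : Type*} [Fintype ι]
    {μ : ι → ℝ} (hμ : ∀ i, 0 ≤ μ i) :
    1 + ∏ i, μ i + (2 ^ Fintype.card ι - 2) * √(∏ i, μ i) ≤ ∏ i, (1 + μ i) := by
  classical
  cases isEmpty_or_nonempty ι
  · norm_num
  set s := √(∏ i, μ i)
  have hexpand : ∏ i, (1 + μ i) = ∑ t : Finset ι, ∏ i ∈ t, μ i := by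
    rw [prod_one_add, powerset_univ]
  have hcompl : ∑ t : Finset ι, ∏ i ∈ tᶜ, μ i = ∑ t : Finset ι, ∏ i ∈ t, μ i :=
    Fintype.sum_bijective (·ᶜ) compl_bijective _ _ fun _ => rfl
  -- every term below is `≥ 0` by AM-GM; the sum over all `t` is `2 ∏ (1 + μ i) - 2 ^ (card ι + 1) s`
  have hgap : ∑ t ∈ {∅, univ}, (∏ i ∈ t, μ i + ∏ i ∈ tᶜ, μ i - 2 * s) ≤
      ∑ t : Finset ι, (∏ i ∈ t, μ i + ∏ i ∈ tᶜ, μ i - 2 * s) :=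
    sum_le_sum_of_subset_of_nonneg (subset_univ _) fun t _ _ =>
      sub_nonneg.2 (two_mul_sqrt_prod_le_prod_add_prod_compl hμ t)
  rw [sum_pair univ_nonempty.ne_empty.symm] at hgap
  simp only [sum_sub_distrib, sum_add_distrib, hcompl, sum_const, card_univ, Fintype.card_finset,
    compl_empty, compl_univ, prod_empty, nsmul_eq_mul] at hgap
  push_cast at hgap
  rw [hexpand]
  linarith

namespace Matrix

variable {𝕜 : Type*} [RCLike 𝕜] {n : Type*} [Fintype n] [DecidableEq n]

theorem IsHermitian.det_cfc {A : Matrix n n 𝕜} (hA : A.IsHermitian) (f : ℝ → ℝ) :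
    (cfc f A).det = ∏ i, (f (hA.eigenvalues i) : 𝕜) := by
  rw [hA.cfc_eq]
  simp [IsHermitian.cfc, -Unitary.conjStarAlgAut_apply]

theorem IsHermitian.det_one_add {A : Matrix n n 𝕜} (hA : A.IsHermitian) :
    (1 + A).det = ∏ i, ((1 + hA.eigenvalues i : ℝ) : 𝕜) := by
  rw [← hA.det_cfc, cfc_add .., cfc_const_one .., cfc_id' ..]

theorem PosSemidef.re_det_nonneg {A : Matrix n n 𝕜} (hA : A.PosSemidef) :
    0 ≤ RCLike.re A.det :=
  (RCLike.nonneg_iff.1 hA.det_nonneg).1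

theorem PosSemidef.ofReal_re_det {A : Matrix n n 𝕜} (hA : A.PosSemidef) :
    (RCLike.re A.det : 𝕜) = A.det :=
  RCLike.conj_eq_iff_re.1 (RCLike.conj_eq_iff_im.2 (RCLike.nonneg_iff.1 hA.det_nonneg).2)

open scoped MatrixOrder in
theorem PosDef.exists_posSemidef_det_add_eq {A B : Matrix n n 𝕜} (hA : A.PosDef)
    (hB : B.PosSemidef) :
    ∃ C : Matrix n n 𝕜, C.PosSemidef ∧ B.det = A.det * C.det ∧
      (A + B).det = A.det * (1 + C).det := by
  set S := CFC.sqrt A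
  have hSS : S * S = A := CFC.sqrt_mul_sqrt_self A hA.posSemidef.nonneg
  have hS : IsUnit S.det := by
    refine isUnit_iff_ne_zero.2 fun h => hA.det_pos.ne' ?_
    rw [← hSS, det_mul, h, zero_mul]
  have hconj (X : Matrix n n 𝕜) : (S * X * S).det = A.det * X.det := by
    rw [det_mul_right_comm, hSS, det_mul]
  have hSC : S * (S⁻¹ * B * S⁻¹) * S = B := by
    simp only [Matrix.mul_assoc, nonsing_inv_mul S hS, Matrix.mul_one,
      mul_nonsing_inv_cancel_left S B hS]
  refine ⟨S⁻¹ * B * S⁻¹, ?_, by rw [← hconj, hSC], ?_⟩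
  · have := hB.conjTranspose_mul_mul_same S⁻¹
    rwa [(CFC.sqrt_nonneg A).posSemidef.1.inv] at this
  · rw [← hconj, Matrix.mul_add, Matrix.add_mul, Matrix.mul_one, hSS, hSC]

theorem PosDef.det_add_ge_hartfiel {A B : Matrix n n 𝕜} (hA : A.PosDef) (hB : B.PosSemidef) :
    RCLike.re (A + B).det ≥ RCLike.re A.det + RCLike.re B.det +
      (2 ^ Fintype.card n - 2) * √(RCLike.re A.det * RCLike.re B.det) := by
  obtain ⟨C, hC, hBC, hABC⟩ := hA.exists_posSemidef_det_add_eq hB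
  set a := RCLike.re A.det
  set μ := hC.1.eigenvalues
  have hAa : A.det = a := hA.posSemidef.ofReal_re_det.symm
  have hb : RCLike.re B.det = a * ∏ i, μ i := by
    rw [hBC, hC.1.det_eq_prod_eigenvalues, hAa, ← RCLike.ofReal_prod, ← RCLike.ofReal_mul,
      RCLike.ofReal_re]
  have hab : RCLike.re (A + B).det = a * ∏ i, (1 + μ i) := by
    rw [hABC, hC.1.det_one_add, hAa, ← RCLike.ofReal_prod, ← RCLike.ofReal_mul, RCLike.ofReal_re]
  have ha : 0 ≤ a := hA.posSemidef.re_det_nonneg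
  calc a + RCLike.re B.det + (2 ^ Fintype.card n - 2) * √(a * RCLike.re B.det)
      = a * (1 + ∏ i, μ i + (2 ^ Fintype.card n - 2) * √(∏ i, μ i)) := by
        rw [hb, ← mul_assoc, Real.sqrt_mul (mul_self_nonneg a), Real.sqrt_mul_self ha]
        ring
    _ ≤ a * ∏ i, (1 + μ i) :=
        mul_le_mul_of_nonneg_left (one_add_prod_add_mul_sqrt_prod_le_prod_one_add
          hC.eigenvalues_nonneg) ha
    _ = RCLike.re (A + B).det := hab.symm

theorem PosSemidef.det_add_ge_hartfiel {A B : Matrix n n 𝕜} (hA : A.PosSemidef)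
    (hB : B.PosSemidef) :
    RCLike.re (A + B).det ≥ RCLike.re A.det + RCLike.re B.det +
      (2 ^ Fintype.card n - 2) * √(RCLike.re A.det * RCLike.re B.det) := by
  by_cases hAd : A.PosDef
  · exact hAd.det_add_ge_hartfiel hB
  by_cases hBd : B.PosDef
  · rw [add_comm A, add_comm (RCLike.re A.det), mul_comm (RCLike.re A.det)]
    exact hBd.det_add_ge_hartfiel hA
  rw [hA.posDef_iff_det_ne_zero, not_not] at hAd
  rw [hB.posDef_iff_det_ne_zero, not_not] at hBd
  simpa [hAd, hBd] using (hA.add hB).re_det_nonneg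

end Matrix

theorem det_add_ge_hartfiel (n : ℕ) (A B : Matrix (Fin n) (Fin n) ℂ)
    (hA : A.PosSemidef) (hB : B.PosSemidef) :
    ((A + B).det).re ≥
      A.det.re + B.det.re + ((2 : ℝ) ^ n - 2) * Real.sqrt (A.det.re * B.det.re) := by
  simpa only [RCLike.re_to_complex, Fintype.card_fin] using hA.det_add_ge_hartfiel hB
end

section
/- Let λ_1 ≥ λ_2 ≥ ... ≥ λ_n ≥ 0 be real numbers and let D = diag(λ_1, λ_2, ..., λ_n). Let U_k = (u_1, ..., u_k) be an n×k complex matrix with orthonormal columns, i.e., U_k* U_k = I_k, and suppose m ≥ 1 is such that the first column u_1 has zero entries in all positions i > m. Let D_m = diag(λ_m, ..., λ_m, λ_{m+1}, ..., λ_n) be the diagonal matrix whose first m diagonal entries equal λ_m and whose remaining diagonal entries are λ_{m+1}, ..., λ_n, and let V = (u_2, ..., u_k) be the n×(k−1) matrix formed by the last k−1 columns of U_k. Then det(U_k* D U_k) ≥ λ_m · det(V* D_m V). -/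
/-!
Since `D_m ≤ D` entrywise on the diagonal, `U* D_m U ≤ U* D U` in the Loewner order, and the
determinant is monotone on positive semidefinite matrices (for `0 ≤ B ≤ A` with `B` invertible,
`A = S M S` with `S = √B` and `M ≥ 1`). As `u₁` vanishes outside the first `m` coordinates,
where `D_m` equals `λ_m`, it is an eigenvector of `D_m`; by orthonormality the first row of
`U* D_m U` is `λ_m e₁`, and expanding along it gives `det (U* D_m U) = λ_m det (V* D_m V)`.
-/

open Matrix
open scoped ComplexOrder MatrixOrder

namespace Matrix

variable {n m 𝕜 : Type*} [RCLike 𝕜]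

lemma diagonal_le_diagonal [DecidableEq n] {d e : n → 𝕜} (h : d ≤ e) :
    diagonal d ≤ diagonal e := by
  rw [le_iff, diagonal_sub]
  exact PosSemidef.diagonal (sub_nonneg.2 h)

variable [Fintype n]

lemma conjTranspose_mul_mul_le_conjTranspose_mul_mul [Finite m] {A B : Matrix n n 𝕜}
    (h : A ≤ B) (U : Matrix n m 𝕜) : Uᴴ * A * U ≤ Uᴴ * B * U := by
  rw [le_iff, ← Matrix.sub_mul, ← Matrix.mul_sub]
  exact h.conjTranspose_mul_mul_same U

lemma submatrix_conjTranspose_mul_mul {l R : Type*} [NonUnitalNonAssocSemiring R] [Star R]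
    (U : Matrix n m R) (A : Matrix n n R) (f : l → m) :
    (Uᴴ * A * U).submatrix f f = (U.submatrix id f)ᴴ * A * U.submatrix id f := by
  rw [submatrix_mul _ _ _ id _ Function.bijective_id,
    submatrix_mul _ _ _ id _ Function.bijective_id, submatrix_id_id, conjTranspose_submatrix]

variable [DecidableEq n]

lemma IsHermitian.one_le_eigenvalues {M : Matrix n n 𝕜} (hM : M.IsHermitian) (h : 1 ≤ M)
    (i : n) : 1 ≤ hM.eigenvalues i := by
  set v := hM.eigenvectorBasis i
  have hv : star ⇑v ⬝ᵥ ⇑v = 1 := by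
    rw [dotProduct_comm, ← EuclideanSpace.inner_eq_star_dotProduct, inner_self_eq_norm_sq_to_K,
      hM.eigenvectorBasis.orthonormal.1 i]
    simp
  have := (le_iff.1 h).re_dotProduct_nonneg v
  rw [sub_mulVec, one_mulVec, dotProduct_sub, hv, map_sub, RCLike.one_re, sub_nonneg] at this
  rwa [hM.eigenvalues_eq]

lemma IsHermitian.one_le_det {M : Matrix n n 𝕜} (hM : M.IsHermitian) (h : 1 ≤ M) :
    1 ≤ M.det := by
  rw [hM.det_eq_prod_eigenvalues, ← RCLike.ofReal_prod, ← RCLike.ofReal_one,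
    RCLike.ofReal_le_ofReal]
  exact Finset.one_le_prod fun i _ => hM.one_le_eigenvalues h i

lemma PosSemidef.det_le_det {A B : Matrix n n 𝕜} (hB : B.PosSemidef) (hBA : B ≤ A) :
    B.det ≤ A.det := by
  have hA : A.PosSemidef := by simpa using (le_iff.1 hBA).add hB
  by_cases hdet : B.det = 0
  · exact hdet ▸ hA.det_nonneg
  set S := CFC.sqrt B
  have hSS : S * S = B := CFC.sqrt_mul_sqrt_self B hB.nonneg
  have hS : IsUnit S.det := by
    rw [isUnit_iff_ne_zero]
    exact fun h => hdet (by rw [← hSS, det_mul, h, zero_mul])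
  have hSh : S⁻¹ᴴ = S⁻¹ := by
    rw [conjTranspose_nonsing_inv, (CFC.sqrt_nonneg B).posSemidef.isHermitian.eq]
  set M := S⁻¹ * A * S⁻¹
  have hM : 1 ≤ M := by
    have := conjTranspose_mul_mul_le_conjTranspose_mul_mul hBA S⁻¹
    rwa [hSh, ← hSS, ← Matrix.mul_assoc, nonsing_inv_mul _ hS, Matrix.one_mul,
      mul_nonsing_inv _ hS] at this
  have hAM : A.det = B.det * M.det := by
    have := det_nonsing_inv_mul_det (A := S) hS
    simp only [M, ← hSS, det_mul]
    linear_combination (-(S.det * A.det * S⁻¹.det) - A.det) * this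
  rw [hAM]
  exact le_mul_of_one_le_right hB.det_nonneg
    ((hSh ▸ hA.conjTranspose_mul_mul_same S⁻¹).isHermitian.one_le_det hM)

lemma det_succ_of_row_zero_eq_single {R : Type*} [CommRing R] {k : ℕ}
    (M : Matrix (Fin (k + 1)) (Fin (k + 1)) R) {c : R} (h : M 0 = Pi.single 0 c) :
    M.det = c * (M.submatrix Fin.succ Fin.succ).det := by
  rw [det_succ_row_zero, Fin.sum_univ_succ, h]
  simp [Fin.succ_ne_zero]

lemma conjTranspose_mul_diagonal_mul_apply_of_eq {R : Type*} [CommSemiring R] [StarRing R]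
    {U : Matrix n m R} {d : n → R} {c : R} {j : m} (h : ∀ i, U i j ≠ 0 → d i = c) (j' : m) :
    (Uᴴ * diagonal d * U) j j' = c * (Uᴴ * U) j j' := by
  rw [mul_apply, mul_apply, Finset.mul_sum]
  refine Finset.sum_congr rfl fun i _ => ?_
  rw [mul_diagonal, conjTranspose_apply]
  by_cases hi : U i j = 0
  · simp [hi]
  · rw [h i hi]
    ring

lemma det_conjTranspose_mul_diagonal_mul_of_eigenvector {R : Type*} [CommRing R] [StarRing R]
    {k : ℕ} {U : Matrix n (Fin (k + 1)) R} (hU : Uᴴ * U = 1) {d : n → R} {c : R}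
    (h : ∀ i, U i 0 ≠ 0 → d i = c) :
    (Uᴴ * diagonal d * U).det =
      c * ((U.submatrix id Fin.succ)ᴴ * diagonal d * U.submatrix id Fin.succ).det := by
  rw [det_succ_of_row_zero_eq_single _ (c := c), submatrix_conjTranspose_mul_mul]
  ext j
  rw [conjTranspose_mul_diagonal_mul_apply_of_eq h, hU, one_apply, Pi.single_apply]
  simp [eq_comm]

end Matrix

theorem det_partial_isometry_diag_ge (n k m : ℕ) (hk : 0 < k) (hm : 1 ≤ m) (hmn : m ≤ n)
    (l : Fin n → ℝ) (hl : Antitone l) (hl0 : ∀ i, 0 ≤ l i)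
    (U : Matrix (Fin n) (Fin k) ℂ) (hU : Uᴴ * U = 1)
    (hcol : ∀ i : Fin n, m ≤ (i : ℕ) → U i ⟨0, hk⟩ = 0)
    (D Dm : Matrix (Fin n) (Fin n) ℂ) (V : Matrix (Fin n) (Fin (k - 1)) ℂ)
    (hD : D = Matrix.diagonal fun i => (l i : ℂ))
    (hDm : Dm = Matrix.diagonal fun i : Fin n =>
      if (i : ℕ) < m then (l ⟨m - 1, by omega⟩ : ℂ) else (l i : ℂ))
    (hV : ∀ (i : Fin n) (j : Fin (k - 1)), V i j = U i ⟨(j : ℕ) + 1, by omega⟩) :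
    ((Uᴴ * D * U).det).re ≥ l ⟨m - 1, by omega⟩ * ((Vᴴ * Dm * V).det).re := by
  set lam := l ⟨m - 1, by omega⟩
  have hDm_psd : Dm.PosSemidef := hDm ▸ PosSemidef.diagonal fun i => by
    dsimp only [Pi.zero_apply]
    split_ifs <;> exact Complex.zero_le_real.2 (hl0 _)
  have hDm_le : Dm ≤ D := by
    rw [hDm, hD]
    refine diagonal_le_diagonal fun i => ?_
    split_ifs with hi
    · exact Complex.real_le_real.2 (hl (by simp [Fin.le_def]; omega))
    · rfl
  have hdet_le := (hDm_psd.conjTranspose_mul_mul_same U).det_le_det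
    (conjTranspose_mul_mul_le_conjTranspose_mul_mul hDm_le U)
  set e : Fin (k - 1 + 1) ≃ Fin k := finCongr (Nat.sub_add_cancel hk)
  have hUe : (U.submatrix id e)ᴴ * U.submatrix id e = 1 := by
    rw [← Matrix.mul_one (U.submatrix id e)ᴴ, ← submatrix_conjTranspose_mul_mul, Matrix.mul_one,
      hU, submatrix_one_equiv]
  have hVe : V = (U.submatrix id e).submatrix id Fin.succ := Matrix.ext hV
  have hdetB : (Uᴴ * Dm * U).det = lam * (Vᴴ * Dm * V).det := by
    rw [hVe, ← det_submatrix_equiv_self e, submatrix_conjTranspose_mul_mul, hDm,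
      det_conjTranspose_mul_diagonal_mul_of_eigenvector hUe
        (fun i hi => if_pos (not_le.1 fun him => hi (hcol i him)))]
  rw [hdetB] at hdet_le
  simpa using (Complex.le_def.1 hdet_le).1
end

section
/- Let A be an n×n complex positive semidefinite matrix with eigenvalues λ_1(A) ≥ λ_2(A) ≥ ... ≥ λ_n(A) and let u_1, ..., u_n be corresponding orthonormal eigenvectors. Let 1 ≤ i_1 < i_2 < ... < i_k ≤ n be indices and let x_1, ..., x_k be orthonormal vectors in ℂ^n such that x_t lies in the span of u_1, ..., u_{i_t} for each t = 1, ..., k. If U_k = (x_1, ..., x_k) is the n×k matrix with columns x_1, ..., x_k, then det(U_k* A U_k) ≥ ∏_{t=1}^k λ_{i_t}(A). -/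
/-!
Write `A = U D Uᴴ` with `U = (u_1, …, u_n)` unitary and `D = diag(λ)`, so that
`U_kᴴ A U_k = M D Mᴴ` with `M = U_kᴴ U`. The rows of `M` are orthonormal, and since
`x_t ∈ span {u_s | s ≤ i_t}`, row `t` of `M` vanishes beyond column `i_t`. By Cauchy–Binet,
`det (M D Mᴴ) = ∑_g (∏_a λ_{g a}) |det M_g|²` over the strictly increasing `g : Fin k → Fin n`,
where `M_g` is the `k × k` minor on the columns `g`. The staircase shape of `M` forces
`det M_g = 0` unless `g ≤ i` pointwise, and then `∏ λ_{g a} ≥ ∏ λ_{i a}`; finally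
`∑_g |det M_g|² = det (M Mᴴ) = 1`.
-/

open Matrix Finset Equiv Function
open scoped ComplexOrder

theorem Finset.sum_filter_injective_eq_sum_strictMono_sum_perm {β : Type*} [AddCommMonoid β]
    {k n : ℕ} (F : (Fin k → Fin n) → β) :
    ∑ p with Injective p, F p = ∑ g with StrictMono g, ∑ σ : Perm (Fin k), F (g ∘ σ) := by
  rw [← sum_product (s := univ.filter StrictMono) (t := univ)
    (f := fun q : (Fin k → Fin n) × Perm (Fin k) => F (q.1 ∘ q.2))]
  refine sum_nbij' (fun p => (p ∘ Tuple.sort p, (Tuple.sort p)⁻¹)) (fun q => q.1 ∘ q.2)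
    (fun p hp => ?_) (fun q hq => ?_) (fun p _ => ?_) (fun q hq => ?_) (fun p _ => ?_)
  all_goals simp only [mem_product, mem_filter, mem_univ, true_and, and_true] at *
  · exact (Tuple.monotone_sort p).strictMono_of_injective (hp.comp (Tuple.sort p).injective)
  · exact hq.injective.comp q.2.injective
  · simp [comp_assoc]
  · obtain ⟨g, σ⟩ := q
    have hsort : σ⁻¹ = Tuple.sort (g ∘ σ) :=
      Tuple.eq_sort_iff.2 ⟨by simpa [comp_assoc] using hq.monotone,
        fun a b hab h => (hab.ne (by simpa using hq.injective h)).elim⟩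
    simp [← hsort, comp_assoc]
  · simp [comp_assoc]

theorem Matrix.det_mul_eq_sum_prod_mul_det_submatrix {R m n : Type*} [CommRing R]
    [Fintype m] [DecidableEq m] [Fintype n]
    (M : Matrix m n R) (N : Matrix n m R) :
    (M * N).det = ∑ p : m → n, (∏ x, N (p x) x) * (M.submatrix id p).det := by
  have hcols : (M * N)ᵀ = of fun x => ∑ j, N j x • Mᵀ j := by
    ext x y
    simp [mul_apply, mul_comm]
  have hsum := (detRowAlternating : (m → R) [⋀^m]→ₗ[R] R).toMultilinearMap.map_sum
    fun x j => N j x • Mᵀ j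
  rw [← det_transpose, hcols]
  refine hsum.trans (Fintype.sum_congr _ _ fun p => ?_)
  rw [AlternatingMap.coe_multilinearMap, AlternatingMap.map_smul_univ, smul_eq_mul,
    ← det_transpose (M.submatrix id p)]
  rfl

theorem Matrix.det_mul_eq_sum_strictMono {R : Type*} [CommRing R] {k n : ℕ}
    (M : Matrix (Fin k) (Fin n) R) (N : Matrix (Fin n) (Fin k) R) :
    (M * N).det = ∑ g with StrictMono g, (M.submatrix id g).det * (N.submatrix g id).det := by
  rw [det_mul_eq_sum_prod_mul_det_submatrix,
    ← sum_filter_of_ne (p := Injective) fun p _ hp => ?_,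
    sum_filter_injective_eq_sum_strictMono_sum_perm]
  · refine sum_congr rfl fun g _ => ?_
    rw [det_apply' (N.submatrix g id), mul_sum]
    refine Fintype.sum_congr _ _ fun σ => ?_
    rw [show M.submatrix id (g ∘ σ) = (M.submatrix id g).submatrix id σ from rfl, det_permute',
      show ∏ x, N ((g ∘ σ) x) x = ∏ x, N.submatrix g id (σ x) x from rfl]
    ring
  · by_contra hinj
    obtain ⟨a, b, hab, hne⟩ := not_injective_iff.1 hinj
    exact hp (by rw [det_zero_of_column_eq hne fun r => by simp [hab], mul_zero])

theorem Equiv.Perm.exists_le_and_apply_le {α : Type*} [LinearOrder α] [LocallyFiniteOrderTop α]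
    (σ : Perm α) (t : α) : ∃ r, t ≤ r ∧ σ r ≤ t := by
  by_contra! h
  have hcard : #(Ici t) ≤ #(Ioi t) :=
    card_le_card_of_injOn σ (fun r hr => mem_Ioi.2 (h r (mem_Ici.1 hr))) σ.injective.injOn
  rw [Ici_eq_cons_Ioi, card_cons] at hcard
  omega

theorem Matrix.det_submatrix_eq_zero_of_lt {R n : Type*} [CommRing R] [Preorder n] {k : ℕ}
    {M : Matrix (Fin k) n R} {i g : Fin k → n} (hi : Monotone i) (hg : Monotone g)
    (hM : ∀ t r, i t < r → M t r = 0) {t : Fin k} (ht : i t < g t) :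
    (M.submatrix id g).det = 0 := by
  rw [det_apply']
  refine sum_eq_zero fun σ _ => ?_
  obtain ⟨r, htr, hσr⟩ := σ.exists_le_and_apply_le t
  refine mul_eq_zero_of_right _ (prod_eq_zero (mem_univ r) (hM _ _ ?_))
  exact (hi hσr).trans_lt (ht.trans_le (hg htr))

theorem Matrix.det_mul_diagonal_mul_conjTranspose {𝕜 : Type*} [RCLike 𝕜] {k n : ℕ}
    (M : Matrix (Fin k) (Fin n) 𝕜) (d : Fin n → ℝ) :
    (M * diagonal (fun r => (d r : 𝕜)) * Mᴴ).det =
      ∑ g with StrictMono g, (((∏ a, d (g a)) * ‖(M.submatrix id g).det‖ ^ 2 : ℝ) : 𝕜) := by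
  rw [Matrix.mul_assoc, det_mul_eq_sum_strictMono]
  refine sum_congr rfl fun g _ => ?_
  have hsub : (diagonal (fun r => (d r : 𝕜)) * Mᴴ).submatrix g id =
      diagonal (fun a => (d (g a) : 𝕜)) * (M.submatrix id g)ᴴ := by
    ext a b
    simp [diagonal_mul]
  rw [hsub, det_mul, det_diagonal, det_conjTranspose, mul_left_comm, RCLike.star_def,
    RCLike.mul_conj]
  push_cast
  ring

theorem Matrix.prod_le_re_det_mul_diagonal_mul_conjTranspose {𝕜 : Type*} [RCLike 𝕜] {k n : ℕ}
    {M : Matrix (Fin k) (Fin n) 𝕜} (hMM : M * Mᴴ = 1) {i : Fin k → Fin n} (hi : Monotone i)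
    (hM : ∀ t r, i t < r → M t r = 0) {d : Fin n → ℝ} (hd : Antitone d) (hd0 : ∀ r, 0 ≤ d r) :
    ∏ t, d (i t) ≤ RCLike.re (M * diagonal (fun r => (d r : 𝕜)) * Mᴴ).det := by
  have hnorm : ∑ g with StrictMono g, ‖(M.submatrix id g).det‖ ^ 2 = (1 : ℝ) := by
    have h := M.det_mul_diagonal_mul_conjTranspose fun _ => 1
    simp only [RCLike.ofReal_one, diagonal_one, Matrix.mul_one, hMM, det_one, prod_const_one,
      one_mul] at h
    exact_mod_cast h.symm
  rw [det_mul_diagonal_mul_conjTranspose, ← RCLike.ofReal_sum, RCLike.ofReal_re,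
    ← mul_one (∏ t, d (i t)), ← hnorm, mul_sum]
  refine sum_le_sum fun g hg => ?_
  by_cases hdet : (M.submatrix id g).det = 0
  · simp [hdet]
  have hgi : ∀ t, g t ≤ i t := fun t => not_lt.1 fun ht =>
    hdet (det_submatrix_eq_zero_of_lt hi (mem_filter.1 hg).2.monotone hM ht)
  exact mul_le_mul_of_nonneg_right
    (prod_le_prod (fun t _ => hd0 _) fun t _ => hd (hgi t)) (sq_nonneg _)

theorem Matrix.PosSemidef.nonneg_of_mulVec_eq_smul {R n : Type*} [CommRing R] [PartialOrder R]
    [StarRing R] [Fintype n] {A : Matrix n n R} (hA : A.PosSemidef) {v : n → R}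
    (hv : star v ⬝ᵥ v = 1) {c : R} (hAv : A *ᵥ v = c • v) : 0 ≤ c := by
  simpa [hAv, hv] using hA.dotProduct_mulVec_nonneg v

theorem Matrix.conjTranspose_mul_self_eq_one_of_orthonormal {α ι m : Type*} [NonAssocSemiring α]
    [Star α] [Fintype m] [DecidableEq ι] {x : ι → m → α}
    (hx : ∀ s t, star (x s) ⬝ᵥ x t = if s = t then 1 else 0) :
    (of fun r t => x t r)ᴴ * (of fun r t => x t r) = 1 := by
  ext s t
  simpa [mul_apply, dotProduct, one_apply] using hx s t

theorem Matrix.eq_mul_diagonal_mul_conjTranspose_of_orthonormal {R n : Type*} [CommRing R]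
    [StarRing R] [Fintype n] [DecidableEq n] {A : Matrix n n R} {u : n → n → R}
    (hu : ∀ s t, star (u s) ⬝ᵥ u t = if s = t then 1 else 0) {μ : n → R}
    (hAu : ∀ t, A *ᵥ u t = μ t • u t) :
    A = (of fun r s => u s r) * diagonal μ * (of fun r s => u s r)ᴴ := by
  set U : Matrix n n R := of fun r s => u s r
  have hAU : A * U = U * diagonal μ := by
    ext r t
    rw [mul_diagonal]
    simpa [mul_apply, mulVec, dotProduct, U, mul_comm] using congrFun (hAu t) r
  rw [← hAU, Matrix.mul_assoc, mul_eq_one_comm.1 (conjTranspose_mul_self_eq_one_of_orthonormal hu),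
    Matrix.mul_one]

theorem Matrix.star_dotProduct_eq_zero_of_mem_span {R m : Type*} [CommSemiring R] [StarRing R]
    [Fintype m] {s : Set (m → R)} {v w : m → R} (hv : v ∈ Submodule.span R s)
    (hs : ∀ y ∈ s, star y ⬝ᵥ w = 0) : star v ⬝ᵥ w = 0 := by
  induction hv using Submodule.span_induction with
  | mem y hy => exact hs y hy
  | zero => simp
  | add y z _ _ hy hz => simp [add_dotProduct, hy, hz]
  | smul c y _ hy => simp [smul_dotProduct, hy]

theorem det_compression_ge_prod_eigenvalues_general (n k : ℕ)
    (A : Matrix (Fin n) (Fin n) ℂ) (hA : A.PosSemidef)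
    (μ : Fin n → ℝ) (hμ : Antitone μ)
    (u : Fin n → (Fin n → ℂ))
    (hu_on : ∀ s t, star (u s) ⬝ᵥ u t = if s = t then 1 else 0)
    (hu_eig : ∀ t, A.mulVec (u t) = (μ t : ℂ) • u t)
    (i : Fin k → Fin n) (hi : StrictMono i)
    (x : Fin k → (Fin n → ℂ))
    (hx_on : ∀ s t, star (x s) ⬝ᵥ x t = if s = t then 1 else 0)
    (hx_span : ∀ t, x t ∈ Submodule.span ℂ (u '' {s : Fin n | s ≤ i t})) :
    (((Matrix.of fun (r : Fin n) (t : Fin k) => x t r)ᴴ * A *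
        (Matrix.of fun (r : Fin n) (t : Fin k) => x t r)).det).re ≥
      ∏ t, μ (i t) := by
  set X : Matrix (Fin n) (Fin k) ℂ := of fun r t => x t r
  set U : Matrix (Fin n) (Fin n) ℂ := of fun r s => u s r
  set M := Xᴴ * U
  have hMM : M * Mᴴ = 1 := by
    rw [conjTranspose_mul, conjTranspose_conjTranspose, Matrix.mul_assoc, ← Matrix.mul_assoc U,
      mul_eq_one_comm.1 (conjTranspose_mul_self_eq_one_of_orthonormal hu_on), Matrix.one_mul,
      conjTranspose_mul_self_eq_one_of_orthonormal hx_on]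
  -- `M t r` is `star (x t) ⬝ᵥ u r`.
  have hM : ∀ t r, i t < r → M t r = 0 := fun t r hr =>
    star_dotProduct_eq_zero_of_mem_span (hx_span t) <| by
      rintro _ ⟨s, hs, rfl⟩
      exact (hu_on s r).trans (if_neg (hs.trans_lt hr).ne)
  have hμ0 : ∀ s, 0 ≤ μ s := fun s =>
    Complex.zero_le_real.1 (hA.nonneg_of_mulVec_eq_smul (by simpa using hu_on s s) (hu_eig s))
  have hcompress : Xᴴ * A * X = M * diagonal (fun s => (μ s : ℂ)) * Mᴴ := by
    rw [eq_mul_diagonal_mul_conjTranspose_of_orthonormal hu_on hu_eig, conjTranspose_mul,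
      conjTranspose_conjTranspose]
    simp only [M, U, Matrix.mul_assoc]
  rw [hcompress]
  exact prod_le_re_det_mul_diagonal_mul_conjTranspose hMM hi.monotone hM hμ hμ0

theorem det_compression_ge_prod_eigenvalues (n k : ℕ) (hk : 0 < k)
    (A : Matrix (Fin n) (Fin n) ℂ) (hA : A.PosSemidef)
    (μ : Fin n → ℝ) (hμ : Antitone μ)
    (u : Fin n → (Fin n → ℂ))
    (hu_on : ∀ s t, star (u s) ⬝ᵥ u t = if s = t then 1 else 0)
    (hu_eig : ∀ t, A.mulVec (u t) = (μ t : ℂ) • u t)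
    (i : Fin k → Fin n) (hi : StrictMono i)
    (x : Fin k → (Fin n → ℂ))
    (hx_on : ∀ s t, star (x s) ⬝ᵥ x t = if s = t then 1 else 0)
    (hx_span : ∀ t, x t ∈ Submodule.span ℂ (u '' {s : Fin n | s ≤ i t})) :
    (((Matrix.of fun (r : Fin n) (t : Fin k) => x t r)ᴴ * A *
        (Matrix.of fun (r : Fin n) (t : Fin k) => x t r)).det).re ≥
      ∏ t, μ (i t) :=
  det_compression_ge_prod_eigenvalues_general n k A hA μ hμ u hu_on hu_eig i hi x hx_on hx_span
end

section
/- Let A and B be n×n complex positive semidefinite matrices and let 1 ≤ k ≤ n. Then ∏_{t=n−k+1}^n λ_t(A + B) ≥ ∏_{t=n−k+1}^n (λ_t(A) + λ_t(B)) ≥ ∏_{t=n−k+1}^n λ_t(A) + ∏_{t=n−k+1}^n λ_t(B) + (2^k − 2) · ∏_{t=n−k+1}^n (λ_t(A) · λ_t(B))^{1/2}. -/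
open Matrix
open scoped ComplexOrder

/-- The `t`-th largest eigenvalue (0-indexed) of a Hermitian matrix
(junk value `0` if the matrix is not Hermitian). -/
noncomputable def eigval {n : ℕ} (A : Matrix (Fin n) (Fin n) ℂ) (t : Fin n) : ℝ :=
  if h : A.IsHermitian then h.eigenvalues (Tuple.sort h.eigenvalues t.rev) else 0

/-- The `t`-th largest singular value (0-indexed) of a square complex matrix. -/
noncomputable def singval {n : ℕ} (X : Matrix (Fin n) (Fin n) ℂ) (t : Fin n) : ℝ :=
  Real.sqrt (eigval (Xᴴ * X) t)

/-!
For every `m ≤ k`, the sum of the `m` smallest eigenvalues of a Hermitian matrix `M` is the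
minimum of `re tr (Vᴴ M V)` over isometries `V` with `m` columns (Ky Fan), so it is superadditive
in `M`. Hence the `k` smallest eigenvalues `x` of `A + B` dominate `y = λ(A) + λ(B)` in all tail
sums. By Abel summation against the increasing weights `1 / x_i` this gives
`∑ y_i / x_i ≤ k`, and then `∏ y_i / x_i ≤ exp (∑ (y_i / x_i - 1)) ≤ 1`.

The second inequality follows by induction on `k` from the two AM-GM inequalities
`P b + Q a ≥ 2 √(P Q) √(a b)` and `a + b ≥ 2 √(a b)`.
-/

namespace ProdEigval

open Finset

variable {n k m : ℕ}

/-- With `eigval` sorted decreasingly, `tailIdx h` indexes the `k` smallest eigenvalues. -/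
def tailIdx (h : k ≤ n) (t : Fin k) : Fin n :=
  Fin.cast (Nat.sub_add_cancel h) (Fin.natAdd (n - k) t)

@[simp] lemma val_tailIdx (h : k ≤ n) (t : Fin k) : (tailIdx h t : ℕ) = n - k + t := rfl

lemma tailIdx_strictMono (h : k ≤ n) : StrictMono (tailIdx h) := fun s t hst => by
  simp only [Fin.lt_def, val_tailIdx] at hst ⊢; omega

lemma tailIdx_tailIdx (hmk : m ≤ k) (hkn : k ≤ n) (t : Fin m) :
    tailIdx hkn (tailIdx hmk t) = tailIdx (hmk.trans hkn) t :=
  Fin.ext (by simp only [val_tailIdx]; omega)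

lemma tailIdx_self (t : Fin n) : tailIdx le_rfl t = t :=
  Fin.ext (by simp)

lemma succ_tailIdx (h : m ≤ k) (t : Fin m) :
    (tailIdx h t).succ = tailIdx (h.trans k.le_succ) t :=
  Fin.ext (by simp only [Fin.val_succ, val_tailIdx]; omega)

lemma mul_sum_le_sum_mul_of_tail_sum_nonneg {c d : Fin k → ℝ} (hc : Monotone c)
    (hd : ∀ m (hm : m ≤ k), 0 ≤ ∑ t : Fin m, d (tailIdx hm t)) {a : ℝ}
    (ha : ∀ i, a ≤ c i) :
    a * ∑ i, d i ≤ ∑ i, c i * d i := by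
  induction k generalizing a with
  | zero => simp
  | succ k ih =>
    have htail : c 0 * ∑ i : Fin k, d i.succ ≤ ∑ i : Fin k, c i.succ * d i.succ :=
      ih (hc.comp (Fin.strictMono_succ.monotone))
        (fun m hm => by
          simpa only [Function.comp_apply, succ_tailIdx] using hd m (hm.trans k.le_succ))
        (fun i => hc (Fin.zero_le _))
    have htotal : 0 ≤ ∑ i, d i := by simpa only [tailIdx_self] using hd (k + 1) le_rfl
    rw [Fin.sum_univ_succ] at htotal ⊢
    rw [Fin.sum_univ_succ]
    nlinarith [mul_le_mul_of_nonneg_right (ha 0) htotal]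

lemma prod_le_prod_of_tail_sum_le {x y : Fin k → ℝ} (hx : Antitone x) (hy : ∀ i, 0 ≤ y i)
    (h : ∀ m (hm : m ≤ k),
      ∑ t : Fin m, y (tailIdx hm t) ≤ ∑ t : Fin m, x (tailIdx hm t)) :
    ∏ i, y i ≤ ∏ i, x i := by
  by_cases hpos : ∀ i, 0 < x i
  · have habel : 0 ≤ ∑ i, (x i)⁻¹ * (x i - y i) := by
      simpa only [zero_mul] using mul_sum_le_sum_mul_of_tail_sum_nonneg
        (fun i j hij => inv_anti₀ (hpos j) (hx hij))
        (fun m hm => by simpa only [sum_sub_distrib, sub_nonneg] using h m hm)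
        (fun i => inv_nonneg.2 (hpos i).le)
    have hratio : ∏ i, y i / x i ≤ 1 := calc
      ∏ i, y i / x i ≤ ∏ i, Real.exp (y i / x i - 1) :=
        prod_le_prod (fun i _ => div_nonneg (hy i) (hpos i).le)
          (fun i _ => by linarith [Real.add_one_le_exp (y i / x i - 1)])
      _ = Real.exp (-∑ i, (x i)⁻¹ * (x i - y i)) := by
        rw [← Real.exp_sum, ← sum_neg_distrib]
        congr 1; refine sum_congr rfl fun i _ => ?_
        field_simp [(hpos i).ne']; ring
      _ ≤ 1 := Real.exp_le_one_iff.2 (neg_nonpos.2 habel)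
    calc ∏ i, y i = (∏ i, x i) * ∏ i, y i / x i := by
          rw [← prod_mul_distrib]
          exact prod_congr rfl fun i _ => (mul_div_cancel₀ _ (hpos i).ne').symm
      _ ≤ ∏ i, x i := mul_le_of_le_one_right (prod_nonneg fun i _ => (hpos i).le) hratio
  · -- the last entries satisfy `0 ≤ y l ≤ x l ≤ x i ≤ 0`
    push Not at hpos
    obtain ⟨i, hi⟩ := hpos
    have hk : 1 ≤ k := i.pos
    set l := tailIdx hk 0
    have hlast : ∀ j, j ≤ l := fun j => by simp only [Fin.le_def, l, val_tailIdx]; omega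
    have hyl : y l ≤ x l := by simpa using h 1 hk
    calc ∏ i, y i = 0 := prod_eq_zero (mem_univ l) (by linarith [hx (hlast i), hy l])
      _ ≤ ∏ i, x i := prod_nonneg fun j _ => by linarith [hx (hlast j), hy l]

lemma sum_tailIdx_le_sum_mul (hm : m ≤ n) {μ : Fin n → ℝ} (hμ : Antitone μ)
    {p : Fin n → ℝ} (hp0 : ∀ t, 0 ≤ p t) (hp1 : ∀ t, p t ≤ 1) (hsum : ∑ t, p t = m) :
    ∑ t : Fin m, μ (tailIdx hm t) ≤ ∑ t, μ t * p t := by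
  rcases m.eq_zero_or_pos with rfl | hm0
  · rw [Nat.cast_zero, sum_eq_zero_iff_of_nonneg fun t _ => hp0 t] at hsum
    simp [hsum]
  obtain ⟨r, rfl⟩ := Nat.exists_eq_add_of_le' hm
  have htail : ∀ t : Fin m, tailIdx hm t = Fin.natAdd r t := fun t => Fin.ext (by simp)
  simp only [htail, Fin.sum_univ_add] at hsum ⊢
  -- the pivot separates the head values of `μ` from the tail values
  set pivot := μ (Fin.natAdd r ⟨0, hm0⟩)
  have hhead : pivot * ∑ i : Fin r, p (Fin.castAdd m i) ≤
      ∑ i : Fin r, μ (Fin.castAdd m i) * p (Fin.castAdd m i) := by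
    rw [mul_sum]
    exact sum_le_sum fun i _ => mul_le_mul_of_nonneg_right
      (hμ (Fin.le_def.2 (by simp))) (hp0 _)
  have htail : ∑ j : Fin m, μ (Fin.natAdd r j) * (1 - p (Fin.natAdd r j)) ≤
      pivot * ∑ j : Fin m, (1 - p (Fin.natAdd r j)) := by
    rw [mul_sum]
    exact sum_le_sum fun j _ => mul_le_mul_of_nonneg_right
      (hμ (Fin.le_def.2 (by simp))) (sub_nonneg.2 (hp1 _))
  simp only [mul_sub, mul_one, sum_sub_distrib, sum_const, card_univ, Fintype.card_fin,
    nsmul_eq_mul] at htail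
  linarith [congrArg (pivot * ·) hsum]

lemma prod_add_prod_add_le_prod_add {ι : Type*} [DecidableEq ι] (s : Finset ι) {a b : ι → ℝ}
    (ha : ∀ i ∈ s, 0 ≤ a i) (hb : ∀ i ∈ s, 0 ≤ b i) :
    ∏ i ∈ s, a i + ∏ i ∈ s, b i + (2 ^ #s - 2) * ∏ i ∈ s, √(a i * b i) ≤
      ∏ i ∈ s, (a i + b i) := by
  induction s using Finset.induction_on with
  | empty => norm_num
  | insert j s hj ih =>
    rcases s.eq_empty_or_nonempty with rfl | hs
    · simp
    simp only [mem_insert, forall_eq_or_imp] at ha hb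
    rw [prod_insert hj, prod_insert hj, prod_insert hj, prod_insert hj, card_insert_of_notMem hj]
    have ih := ih ha.2 hb.2
    set P := ∏ i ∈ s, a i
    set Q := ∏ i ∈ s, b i
    set G := ∏ i ∈ s, √(a i * b i)
    have hP : 0 ≤ P := prod_nonneg ha.2
    have hQ : 0 ≤ Q := prod_nonneg hb.2
    have hG : 0 ≤ G := prod_nonneg fun i _ => Real.sqrt_nonneg _
    have hGsq : G ^ 2 = P * Q := by
      rw [← prod_pow, ← prod_mul_distrib]
      exact prod_congr rfl fun i hi => Real.sq_sqrt (mul_nonneg (ha.2 i hi) (hb.2 i hi))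
    have hgsq : √(a j * b j) ^ 2 = a j * b j := Real.sq_sqrt (mul_nonneg ha.1 hb.1)
    have hcross : 2 * (√(a j * b j) * G) ≤ a j * Q + b j * P :=
      two_mul_le_add_of_sq_le_mul (mul_nonneg ha.1 hQ) (mul_nonneg hb.1 hP)
        (le_of_eq (by rw [mul_pow, hgsq, hGsq]; ring))
    have hpair : 2 * √(a j * b j) ≤ a j + b j :=
      two_mul_le_add_of_sq_le_mul ha.1 hb.1 hgsq.le
    have hcard : (2 : ℝ) ≤ 2 ^ #s := le_self_pow₀ one_le_two (card_ne_zero.2 hs)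
    rw [pow_succ]
    nlinarith [mul_le_mul_of_nonneg_left ih (add_nonneg ha.1 hb.1),
      mul_le_mul_of_nonneg_left hpair (mul_nonneg (sub_nonneg.2 hcard) hG)]

lemma conjTranspose_submatrix_mul_mul_submatrix {ι κ : Type*} [Fintype ι]
    (U M : Matrix ι ι ℂ) (f : κ → ι) :
    (U.submatrix id f)ᴴ * M * U.submatrix id f = (Uᴴ * M * U).submatrix f f := by
  rw [conjTranspose_submatrix, submatrix_mul _ _ _ id _ Function.bijective_id,
    submatrix_mul _ _ _ id _ Function.bijective_id, submatrix_id_id]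

lemma re_diag_mul_conjTranspose_mem_Icc {ι κ : Type*} [Fintype ι] [Fintype κ] [DecidableEq ι]
    [DecidableEq κ] {W : Matrix ι κ ℂ} (hW : Wᴴ * W = 1) (s : ι) :
    ((W * Wᴴ) s s).re ∈ Set.Icc 0 1 := by
  have hproj : 1 - W * Wᴴ = (1 - W * Wᴴ)ᴴ * (1 - W * Wᴴ) := by
    simp only [conjTranspose_sub, conjTranspose_one, conjTranspose_mul,
      conjTranspose_conjTranspose, sub_mul, mul_sub, one_mul, mul_one, Matrix.mul_assoc,
      ← Matrix.mul_assoc Wᴴ W, hW, Matrix.one_mul]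
    abel
  have h0 : 0 ≤ (W * Wᴴ) s s := (posSemidef_self_mul_conjTranspose W).diag_nonneg
  have h1 : 0 ≤ (1 - W * Wᴴ : Matrix ι ι ℂ) s s := by
    rw [hproj]; exact (posSemidef_conjTranspose_mul_self _).diag_nonneg
  rw [Complex.nonneg_iff] at h0 h1
  simp only [Matrix.sub_apply, one_apply_eq, Complex.sub_re, Complex.one_re, sub_nonneg] at h1
  exact ⟨h0.1, h1.1⟩

lemma re_trace_conjTranspose_mul_diagonal_mul {ι κ : Type*} [Fintype ι] [Fintype κ]
    [DecidableEq ι] (d : ι → ℝ) (W : Matrix ι κ ℂ) :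
    (Wᴴ * diagonal (fun s => (d s : ℂ)) * W).trace.re = ∑ s, d s * ((W * Wᴴ) s s).re := by
  rw [trace_mul_cycle, trace, Complex.re_sum]
  simp [mul_comm]

section Eigval

variable {M : Matrix (Fin n) (Fin n) ℂ}

lemma eigval_antitone (hM : M.IsHermitian) : Antitone (eigval M) := fun s t hst => by
  simp only [eigval, dif_pos hM]
  exact Tuple.monotone_sort hM.eigenvalues (Fin.rev_le_rev.mpr hst)

lemma eigval_nonneg (hM : M.PosSemidef) (t : Fin n) : 0 ≤ eigval M t := by
  simp only [eigval, dif_pos hM.isHermitian]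
  exact hM.eigenvalues_nonneg _

lemma exists_perm_eigval_eq (hM : M.IsHermitian) :
    ∃ σ : Equiv.Perm (Fin n), ∀ t, eigval M t = hM.eigenvalues (σ t) :=
  ⟨Fin.revPerm.trans (Tuple.sort hM.eigenvalues), fun t => by simp [eigval, hM]⟩

lemma exists_unitary_conjTranspose_mul_mul_eq_diagonal (hM : M.IsHermitian) :
    ∃ U : Matrix (Fin n) (Fin n) ℂ, Uᴴ * U = 1 ∧ U * Uᴴ = 1 ∧
      Uᴴ * M * U = diagonal (fun s => (hM.eigenvalues s : ℂ)) :=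
  ⟨hM.eigenvectorUnitary, Unitary.coe_star_mul_self _, Unitary.coe_mul_star_self _,
    by simpa [Function.comp_def, star_eq_conjTranspose] using
      hM.conjStarAlgAut_star_eigenvectorUnitary⟩

lemma sum_eigval_tailIdx_le_re_trace (hM : M.IsHermitian) (hm : m ≤ n)
    {V : Matrix (Fin n) (Fin m) ℂ} (hV : Vᴴ * V = 1) :
    ∑ t : Fin m, eigval M (tailIdx hm t) ≤ (Vᴴ * M * V).trace.re := by
  obtain ⟨σ, hσ⟩ := exists_perm_eigval_eq hM
  obtain ⟨U, -, hU, hdiag⟩ := exists_unitary_conjTranspose_mul_mul_eq_diagonal hM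
  set W := Uᴴ * V
  have hW : Wᴴ * W = 1 := by
    rw [conjTranspose_mul, conjTranspose_conjTranspose, Matrix.mul_assoc, ← Matrix.mul_assoc U,
      hU, Matrix.one_mul, hV]
  have hconj : Vᴴ * M * V = Wᴴ * (Uᴴ * M * U) * W := by
    simp only [W, conjTranspose_mul, conjTranspose_conjTranspose, Matrix.mul_assoc]
    simp only [← Matrix.mul_assoc U, hU, Matrix.one_mul]
  rw [hconj, hdiag, re_trace_conjTranspose_mul_diagonal_mul, ← Equiv.sum_comp σ]
  simp only [← hσ]
  refine sum_tailIdx_le_sum_mul hm (eigval_antitone hM)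
    (fun t => (re_diag_mul_conjTranspose_mem_Icc hW _).1)
    (fun t => (re_diag_mul_conjTranspose_mem_Icc hW _).2) ?_
  have htr : (W * Wᴴ).trace = (Wᴴ * W).trace := trace_mul_comm _ _
  rw [hW, trace_one, trace] at htr
  simpa [Equiv.sum_comp σ (fun s => ((W * Wᴴ) s s).re), ← Complex.re_sum] using
    congrArg Complex.re htr

lemma exists_isometry_re_trace_eq_sum_eigval_tailIdx (hM : M.IsHermitian) (hm : m ≤ n) :
    ∃ V : Matrix (Fin n) (Fin m) ℂ, Vᴴ * V = 1 ∧
      (Vᴴ * M * V).trace.re = ∑ t : Fin m, eigval M (tailIdx hm t) := by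
  obtain ⟨σ, hσ⟩ := exists_perm_eigval_eq hM
  obtain ⟨U, hU, -, hdiag⟩ := exists_unitary_conjTranspose_mul_mul_eq_diagonal hM
  have hinj : Function.Injective (σ ∘ tailIdx hm) :=
    σ.injective.comp (tailIdx_strictMono hm).injective
  refine ⟨U.submatrix id (σ ∘ tailIdx hm), ?_, ?_⟩
  · simpa only [Matrix.mul_one, hU, submatrix_one _ hinj] using
      conjTranspose_submatrix_mul_mul_submatrix U 1 (σ ∘ tailIdx hm)
  · rw [conjTranspose_submatrix_mul_mul_submatrix, hdiag, submatrix_diagonal _ _ hinj,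
      trace_diagonal, Complex.re_sum]
    simp [hσ]

lemma sum_eigval_tailIdx_add_le {A B : Matrix (Fin n) (Fin n) ℂ} (hA : A.IsHermitian)
    (hB : B.IsHermitian) (hm : m ≤ n) :
    ∑ t : Fin m, (eigval A (tailIdx hm t) + eigval B (tailIdx hm t)) ≤
      ∑ t : Fin m, eigval (A + B) (tailIdx hm t) := by
  obtain ⟨V, hV, htrace⟩ := exists_isometry_re_trace_eq_sum_eigval_tailIdx (hA.add hB) hm
  rw [sum_add_distrib, ← htrace, Matrix.mul_add, Matrix.add_mul, trace_add, Complex.add_re]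
  exact add_le_add (sum_eigval_tailIdx_le_re_trace hA hm hV)
    (sum_eigval_tailIdx_le_re_trace hB hm hV)

lemma prod_eigval_tailIdx_add_le {A B : Matrix (Fin n) (Fin n) ℂ} (hA : A.PosSemidef)
    (hB : B.PosSemidef) (hk : k ≤ n) :
    ∏ t : Fin k, (eigval A (tailIdx hk t) + eigval B (tailIdx hk t)) ≤
      ∏ t : Fin k, eigval (A + B) (tailIdx hk t) :=
  prod_le_prod_of_tail_sum_le
    ((eigval_antitone (hA.add hB).isHermitian).comp_monotone (tailIdx_strictMono hk).monotone)
    (fun t => add_nonneg (eigval_nonneg hA _) (eigval_nonneg hB _))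
    (fun m hm => by
      simpa only [tailIdx_tailIdx] using
        sum_eigval_tailIdx_add_le hA.isHermitian hB.isHermitian (hm.trans hk))

end Eigval

end ProdEigval

theorem prod_smallest_eig_add_ge (n k : ℕ) (hkn : k ≤ n)
    (A B : Matrix (Fin n) (Fin n) ℂ) (hA : A.PosSemidef) (hB : B.PosSemidef) :
    (∏ t : Fin k, eigval (A + B) ⟨n - k + (t : ℕ), by omega⟩ ≥
        ∏ t : Fin k, (eigval A ⟨n - k + (t : ℕ), by omega⟩ +
          eigval B ⟨n - k + (t : ℕ), by omega⟩)) ∧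
      ∏ t : Fin k, (eigval A ⟨n - k + (t : ℕ), by omega⟩ +
          eigval B ⟨n - k + (t : ℕ), by omega⟩) ≥
        ∏ t : Fin k, eigval A ⟨n - k + (t : ℕ), by omega⟩ +
          ∏ t : Fin k, eigval B ⟨n - k + (t : ℕ), by omega⟩ +
          ((2 : ℝ) ^ k - 2) *
            ∏ t : Fin k, Real.sqrt (eigval A ⟨n - k + (t : ℕ), by omega⟩ *
              eigval B ⟨n - k + (t : ℕ), by omega⟩) := by
  refine ⟨ProdEigval.prod_eigval_tailIdx_add_le hA hB hkn, ?_⟩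
  have h := ProdEigval.prod_add_prod_add_le_prod_add Finset.univ
    (fun t _ => ProdEigval.eigval_nonneg hA (ProdEigval.tailIdx hkn t))
    (fun t _ => ProdEigval.eigval_nonneg hB (ProdEigval.tailIdx hkn t))
  rwa [Finset.card_univ, Fintype.card_fin] at h
end

section
/- Let A and B be n×n complex strictly contractive matrices, i.e., I − A*A and I − B*B are positive definite. Then |det(I − A*B)|^2 ≥ det(I − A*A) · det(I − B*B) + |det(A − B)|^2 + (2^n − 2) · (det(I − A*A) · det(I − B*B))^{1/2} · |det(A − B)|. -/
open Matrix
open scoped ComplexOrder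

/-!
Hua's identity `(1 - AᴴB)ᴴ (1 - AᴴA)⁻¹ (1 - AᴴB) = (1 - BᴴB) + (A - B)ᴴ (1 - AAᴴ)⁻¹ (A - B)`
exhibits `|det (1 - AᴴB)|² / det (1 - AᴴA)` as `det (P + Q)` with `P = 1 - BᴴB` positive definite
and `Q` positive semidefinite of determinant `|det (A - B)|² / det (1 - AᴴA)`. Writing `P = RᴴR`,
the inequality `det (P + Q) ≥ det P + det Q + (2ⁿ - 2) √(det P det Q)` reduces to the case `P = 1`,
i.e. to `∏ (1 + μᵢ) ≥ 1 + ∏ μᵢ + (2ⁿ - 2) ∏ √μᵢ` for the eigenvalues `μᵢ ≥ 0` of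
`(R⁻¹)ᴴ Q R⁻¹`: of the `2ⁿ` monomials of the expanded product, the `2ⁿ - 2` mixed ones pair up
by AM–GM.
-/

open Finset in
theorem one_add_prod_sq_add_le_prod_one_add_sq {ι : Type*} (s : Finset ι) {g : ι → ℝ}
    (hg : ∀ i ∈ s, 0 ≤ g i) :
    1 + ∏ i ∈ s, g i ^ 2 + (2 ^ #s - 2) * ∏ i ∈ s, g i ≤ ∏ i ∈ s, (1 + g i ^ 2) := by
  rcases s.eq_empty_or_nonempty with rfl | hs
  · norm_num
  induction hs using Nonempty.cons_induction with
  | singleton a => simp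
  | cons a s ha hs ih =>
    have hgs : ∀ i ∈ s, 0 ≤ g i := fun i hi ↦ hg i (mem_cons_of_mem hi)
    have hS : 0 ≤ ∏ i ∈ s, g i := prod_nonneg hgs
    have hk : (2 : ℝ) ≤ 2 ^ #s := le_self_pow₀ one_le_two hs.card_pos.ne'
    have ih := mul_le_mul_of_nonneg_left (ih hgs) (by positivity : (0 : ℝ) ≤ 1 + g a ^ 2)
    rw [prod_pow] at ih
    rw [prod_cons, prod_cons, prod_cons, card_cons, pow_succ 2 #s, prod_pow]
    -- the slack is `(S - g a) ^ 2 + (2 ^ #s - 2) * S * (1 - g a) ^ 2` with `S = ∏ i ∈ s, g i`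
    nlinarith [sq_nonneg (∏ i ∈ s, g i - g a),
      mul_nonneg (mul_nonneg (sub_nonneg.2 hk) hS) (sq_nonneg (1 - g a))]

theorem hua_identity {R : Type*} [Ring R] [StarRing R] (a b : R)
    [Invertible (1 - star a * a)] [Invertible (1 - a * star a)] :
    star (1 - star a * b) * ⅟(1 - star a * a) * (1 - star a * b) =
      1 - star b * b + star (a - b) * ⅟(1 - a * star a) * (a - b) := by
  have hTG := invOf_mul_self (1 - a * star a)
  have hGT := mul_invOf_self (1 - a * star a)
  set T := ⅟(1 - a * star a)
  have hinv : ⅟(1 - star a * a) = 1 + star a * T * a := by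
    refine invOf_eq_left_inv ?_
    calc (1 + star a * T * a) * (1 - star a * a)
        = 1 - star a * a + star a * (T * (1 - a * star a)) * a := by noncomm_ring
      _ = 1 := by rw [hTG]; noncomm_ring
  calc star (1 - star a * b) * ⅟(1 - star a * a) * (1 - star a * b)
      = (1 - star b * a) * (1 + star a * T * a) * (1 - star a * b) := by
        rw [hinv, star_sub, star_one, star_mul, star_star]
    -- an identity in any ring; the last three terms vanish because `T` inverts `1 - a * star a`
    _ = 1 - star b * b + (star a - star b) * T * (a - b)
          + (star a - star b) * (T * (1 - a * star a) - 1) * b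
          + star b * ((1 - a * star a) * T - 1) * (a - b)
          + star b * ((1 - a * star a) * T - 1) * (1 - a * star a) * b := by
        noncomm_ring
    _ = 1 - star b * b + star (a - b) * T * (a - b) := by
        rw [hTG, hGT, star_sub]; noncomm_ring

namespace Matrix

open RCLike

variable {𝕜 m : Type*} [RCLike 𝕜] [Fintype m] [DecidableEq m]

theorem IsHermitian.det_one_add_s13 {M : Matrix m m 𝕜} (hM : M.IsHermitian) :
    (1 + M).det = ∏ i, (1 + (hM.eigenvalues i : 𝕜)) := by
  have h := congrArg (Polynomial.eval (-1)) hM.charpoly_eq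
  rw [eval_charpoly, Polynomial.eval_prod, map_neg, map_one, ← neg_add', det_neg] at h
  simp only [Polynomial.eval_sub, Polynomial.eval_X, Polynomial.eval_C, ← neg_add',
    Finset.prod_neg, Finset.card_univ] at h
  exact mul_left_cancel₀ (pow_ne_zero _ (neg_ne_zero.2 one_ne_zero)) h

theorem PosSemidef.one_add_det_add_sqrt_le_det_one_add {M : Matrix m m 𝕜} (hM : M.PosSemidef) :
    1 + re M.det + (2 ^ Fintype.card m - 2) * √(re M.det) ≤ re (1 + M).det := by
  have hμ : ∀ i, 0 ≤ hM.1.eigenvalues i := hM.eigenvalues_nonneg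
  rw [hM.1.det_eq_prod_eigenvalues, hM.1.det_one_add_s13, ← ofReal_prod,
    show ∏ i, (1 + (hM.1.eigenvalues i : 𝕜)) = ((∏ i, (1 + hM.1.eigenvalues i) : ℝ) : 𝕜) by
      push_cast; rfl,
    ofReal_re, ofReal_re, Real.sqrt_prod _ fun i _ ↦ hμ i]
  simpa only [Real.sq_sqrt (hμ _), Finset.card_univ] using
    one_add_prod_sq_add_le_prod_one_add_sq Finset.univ
      fun i _ ↦ Real.sqrt_nonneg (hM.1.eigenvalues i)

open scoped MatrixOrder in
theorem PosDef.det_add_det_add_sqrt_le_det_add {P Q : Matrix m m 𝕜} (hP : P.PosDef)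
    (hQ : Q.PosSemidef) :
    re P.det + re Q.det + (2 ^ Fintype.card m - 2) * √(re P.det * re Q.det) ≤ re (P + Q).det := by
  obtain ⟨p, hp, hpP⟩ := pos_iff_exists_ofReal.mp hP.det_pos
  obtain ⟨R, hR, rfl⟩ :=
    CStarAlgebra.isStrictlyPositive_iff_eq_star_mul_self.mp hP.isStrictlyPositive
  lift R to (Matrix m m 𝕜)ˣ using hR
  have hRinv : ((R⁻¹ : (Matrix m m 𝕜)ˣ) : Matrix m m 𝕜) * R = 1 := R.inv_mul
  set M := star ((R⁻¹ : (Matrix m m 𝕜)ˣ) : Matrix m m 𝕜) * Q * (R⁻¹ : (Matrix m m 𝕜)ˣ)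
  have hM : M.PosSemidef := hQ.conjTranspose_mul_mul_same _
  have hQM : Q = star (R : Matrix m m 𝕜) * M * R := by
    rw [mul_assoc, mul_assoc, hRinv, mul_one, ← mul_assoc, ← star_mul, hRinv, star_one, one_mul]
  have hPQ : star (R : Matrix m m 𝕜) * R + Q = star (R : Matrix m m 𝕜) * (1 + M) * R := by
    rw [hQM, mul_add, add_mul, mul_one]
  have hdet (X : Matrix m m 𝕜) :
      (star (R : Matrix m m 𝕜) * X * R).det = (star (R : Matrix m m 𝕜) * R).det * X.det := by
    simp only [det_mul]; ring
  rw [hPQ, hQM, hdet, hdet, ← hpP, re_ofReal_mul, re_ofReal_mul, ofReal_re,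
    ← mul_assoc, Real.sqrt_mul (mul_self_nonneg p), Real.sqrt_mul_self hp.le]
  nlinarith [mul_le_mul_of_nonneg_left hM.one_add_det_add_sqrt_le_det_one_add hp.le]

/-- `1 - Aᴴ * A` and `1 - A * Aᴴ` are the two Schur complements of `!![1, A; Aᴴ, 1]`. -/
theorem PosDef.one_sub_mul_conjTranspose {n : Type*} [Fintype n] [DecidableEq n]
    {A : Matrix m n 𝕜} (hA : (1 - Aᴴ * A).PosDef) : (1 - A * Aᴴ).PosDef := by
  have : Invertible (1 : Matrix m m 𝕜) := invertibleOne
  have : Invertible (1 : Matrix n n 𝕜) := invertibleOne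
  have hblocks := (PosDef.fromBlocks₁₁ A 1 PosDef.one).mpr (by simpa using hA.posSemidef)
  have hpsd : (1 - A * Aᴴ).PosSemidef := by
    simpa using (PosDef.fromBlocks₂₂ 1 A PosDef.one).mp hblocks
  rw [hpsd.posDef_iff_det_ne_zero, det_one_sub_mul_comm]
  exact hA.det_pos.ne'

theorem det_conjTranspose_mul_inv_mul (X H : Matrix m m 𝕜) :
    (Xᴴ * H⁻¹ * X).det = ‖X.det‖ ^ 2 / H.det := by
  rw [det_mul, det_mul, det_conjTranspose, det_nonsing_inv, Ring.inverse_eq_inv', mul_right_comm,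
    star_def, RCLike.conj_mul, div_eq_mul_inv]

theorem hua_det_inequality {A B : Matrix m m 𝕜} (hA : (1 - Aᴴ * A).PosDef)
    (hB : (1 - Bᴴ * B).PosDef) :
    re (1 - Aᴴ * A).det * re (1 - Bᴴ * B).det + ‖(A - B).det‖ ^ 2 +
        (2 ^ Fintype.card m - 2) * √(re (1 - Aᴴ * A).det * re (1 - Bᴴ * B).det) *
          ‖(A - B).det‖ ≤ ‖(1 - Aᴴ * B).det‖ ^ 2 := by
  have hA' := hA.one_sub_mul_conjTranspose
  have := hA.isUnit.invertible
  have := hA'.isUnit.invertible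
  have hua := hua_identity A B
  simp only [star_eq_conjTranspose, invOf_eq_nonsing_inv] at hua
  have hdet := hB.det_add_det_add_sqrt_le_det_add
    (hA'.inv.posSemidef.conjTranspose_mul_mul_same (A - B))
  rw [← hua, det_conjTranspose_mul_inv_mul, det_conjTranspose_mul_inv_mul,
    det_one_sub_mul_comm A Aᴴ] at hdet
  obtain ⟨a, ha, hadet⟩ := pos_iff_exists_ofReal.mp hA.det_pos
  obtain ⟨b, hb, hbdet⟩ := pos_iff_exists_ofReal.mp hB.det_pos
  rw [← hadet, ← hbdet] at hdet ⊢
  simp only [← ofReal_pow, ← ofReal_div, ofReal_re] at hdet ⊢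
  have hsqrt : √(b * (‖(A - B).det‖ ^ 2 / a)) = √(a * b) * ‖(A - B).det‖ / a := by
    rw [← Real.sqrt_sq (by positivity : 0 ≤ √(a * b) * ‖(A - B).det‖ / a), div_pow, mul_pow,
      Real.sq_sqrt (by positivity)]
    field_simp
  rw [hsqrt, le_div_iff₀ ha] at hdet
  field_simp at hdet
  rw [mul_comm b a] at hdet
  linarith

end Matrix

theorem hua_det_strengthened (n : ℕ) (A B : Matrix (Fin n) (Fin n) ℂ)
    (hA : (1 - Aᴴ * A).PosDef) (hB : (1 - Bᴴ * B).PosDef) :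
    ‖(1 - Aᴴ * B).det‖ ^ 2 ≥
      ((1 - Aᴴ * A).det).re * ((1 - Bᴴ * B).det).re +
        ‖(A - B).det‖ ^ 2 +
        ((2 : ℝ) ^ n - 2) *
          Real.sqrt (((1 - Aᴴ * A).det).re * ((1 - Bᴴ * B).det).re) *
          ‖(A - B).det‖ := by
  simpa only [RCLike.re_to_complex, Fintype.card_fin] using hua_det_inequality hA hB
end

section
/- Let A and B be n×n complex matrices with A strictly contractive, i.e., I − A*A (equivalently I − AA*) is positive definite, and let H = (A − B)* (I − AA*)^{−1} (A − B). Then for every 1 ≤ k ≤ n, ∏_{t=1}^k λ_{n−t+1}(H) ≥ ∏_{t=1}^k σ_{n−t+1}(A − B)^2 / (1 − λ_{n−t+1}(A*A)). -/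
open Matrix
open scoped ComplexOrder

/-!
Write `C = A - B` and diagonalize `(1 - A Aᴴ)⁻¹ = U diag(d) Uᴴ`; since `A Aᴴ` and `Aᴴ A` have
the same eigenvalues, the `d i` are the numbers `1 / (1 - λᵢ(Aᴴ A))`. By the Cauchy–Binet
formula, `det (Wᴴ diag(d) W) = ∑_S (∏_{i ∈ S} d i) |det W_S|²` for every `n × k` matrix `W`,
which is at least the product of the `k` smallest `d i` times `∑_S |det W_S|² = det (Wᴴ W)`.
Let the columns of `Q` be orthonormal eigenvectors of `H = Cᴴ U diag(d) Uᴴ C` for its `k`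
smallest eigenvalues. The product of these eigenvalues is `det (Qᴴ H Q)`, which by the
inequality for `W = Uᴴ C Q` is at least the product of the `k` smallest `d i` times
`det (Qᴴ Cᴴ C Q)`; applied to a diagonalization of `Cᴴ C` and `W = Q`, the inequality bounds
`det (Qᴴ Cᴴ C Q)` below by the product of the `k` smallest eigenvalues of `Cᴴ C`, i.e. of the
`k` smallest squared singular values of `C`.
-/

theorem StrictMono.val_le_val_apply {k n : ℕ} {g : Fin k → Fin n} (hg : StrictMono g)
    (t : Fin k) : (t : ℕ) ≤ g t := by
  rw [← Fin.card_Iio t, ← Fin.card_Iio (g t)]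
  exact Finset.card_le_card_of_injOn g (fun i hi => by simpa using hg (by simpa using hi))
    hg.injective.injOn

theorem Tuple.comp_comp_sort_of_monotoneOn {α β : Type*} [LinearOrder α] [LinearOrder β]
    {n : ℕ} {w : Fin n → α} {φ : α → β} (hφ : MonotoneOn φ (Set.range w)) :
    (φ ∘ w) ∘ Tuple.sort (φ ∘ w) = φ ∘ w ∘ Tuple.sort w :=
  (Tuple.comp_sort_eq_comp_iff_monotone.2 fun _ _ hij =>
    hφ (Set.mem_range_self _) (Set.mem_range_self _) (Tuple.monotone_sort w hij)).symm

section CauchyBinet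

variable {R : Type*} [CommRing R] {k n : ℕ}

theorem det_mul_eq_sum_det_submatrix_mul_prod (A : Matrix (Fin k) (Fin n) R)
    (B : Matrix (Fin n) (Fin k) R) :
    (A * B).det = ∑ f : Fin k → Fin n, (A.submatrix id f).det * ∏ i, B (f i) i := by
  simp_rw [det_apply', mul_apply, Finset.prod_univ_sum, Finset.sum_mul, Finset.mul_sum]
  rw [Finset.sum_comm]
  refine Finset.sum_congr rfl fun f _ => Finset.sum_congr rfl fun σ _ => ?_
  simp only [submatrix_apply, id_eq, Finset.prod_mul_distrib, mul_assoc]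

def injectiveEquivPermProdStrictMono :
    {f : Fin k → Fin n // f.Injective} ≃
      Equiv.Perm (Fin k) × {g : Fin k → Fin n // StrictMono g} where
  toFun f := ((Tuple.sort f.1).symm, ⟨f.1 ∘ Tuple.sort f.1,
    (Tuple.monotone_sort f.1).strictMono_of_injective (f.2.comp (Tuple.sort f.1).injective)⟩)
  invFun p := ⟨p.2.1 ∘ p.1, p.2.2.injective.comp p.1.injective⟩
  left_inv f := by ext; simp
  right_inv := by
    rintro ⟨σ, g, hg⟩
    have hsort : g ∘ σ ∘ Tuple.sort (g ∘ σ) = g := by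
      rw [← Function.comp_assoc, Tuple.comp_perm_comp_sort_eq_comp_sort,
        Tuple.sort_eq_refl_iff_monotone.2 hg.monotone]
      rfl
    have hσ : (Tuple.sort (g ∘ σ)).symm = σ := by
      have h : ⇑σ ∘ Tuple.sort (g ∘ σ) = id := hg.injective.comp_left hsort
      refine Equiv.ext fun i => ?_
      simpa using (congrFun h ((Tuple.sort (g ∘ σ)).symm i)).symm
    exact Prod.ext hσ (Subtype.ext hsort)

theorem det_mul_eq_sum_det_submatrix_mul_det_submatrix (A : Matrix (Fin k) (Fin n) R)
    (B : Matrix (Fin n) (Fin k) R) :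
    (A * B).det = ∑ g : {g : Fin k → Fin n // StrictMono g},
      (A.submatrix id g).det * (B.submatrix g id).det := by
  classical
  rw [det_mul_eq_sum_det_submatrix_mul_prod,
    ← Fintype.sum_subtype_add_sum_subtype Function.Injective]
  have hnoninj : ∑ f : {f : Fin k → Fin n // ¬ f.Injective},
      (A.submatrix id f).det * ∏ i, B (f.1 i) i = 0 := Finset.sum_eq_zero fun f _ => by
    obtain ⟨i, j, hij, hne⟩ := Function.not_injective_iff.1 f.2
    rw [det_zero_of_column_eq hne fun r => by simp [hij], zero_mul]
  rw [hnoninj, add_zero, ← injectiveEquivPermProdStrictMono.symm.sum_comp,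
    Fintype.sum_prod_type_right]
  refine Finset.sum_congr rfl fun g _ => ?_
  rw [det_apply' (B.submatrix g id), Finset.mul_sum]
  refine Finset.sum_congr rfl fun σ _ => ?_
  change ((A.submatrix id g).submatrix id σ).det * ∏ i, B (g.1 (σ i)) i = _
  rw [det_permute']
  simp only [submatrix_apply, id_eq]
  ring

end CauchyBinet

section GramDeterminant

variable {k n : ℕ}

theorem det_conjTranspose_mul_diagonal_mul (X : Matrix (Fin n) (Fin k) ℂ) (d : Fin n → ℝ) :
    (Xᴴ * diagonal (fun i => (d i : ℂ)) * X).det =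
      ((∑ g : {g : Fin k → Fin n // StrictMono g},
        (∏ j, d (g.1 j)) * Complex.normSq (X.submatrix g id).det : ℝ) : ℂ) := by
  rw [Matrix.mul_assoc, det_mul_eq_sum_det_submatrix_mul_det_submatrix]
  push_cast
  refine Finset.sum_congr rfl fun g _ => ?_
  have hdiag : (diagonal (fun i => (d i : ℂ)) * X).submatrix g id
      = diagonal (fun j => (d (g.1 j) : ℂ)) * X.submatrix g id := by
    ext i j
    simp [diagonal_mul]
  rw [hdiag, det_mul, det_diagonal, ← conjTranspose_submatrix, det_conjTranspose,
    Complex.normSq_eq_conj_mul_self, Complex.star_def]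
  ring

theorem prod_mul_det_le_det_conjTranspose_mul_diagonal_mul_of_monotone (hkn : k ≤ n)
    (X : Matrix (Fin n) (Fin k) ℂ) {d : Fin n → ℝ} (hd₀ : ∀ i, 0 ≤ d i) (hd : Monotone d) :
    (∏ t, (d (Fin.castLE hkn t) : ℂ)) * (Xᴴ * X).det ≤
      (Xᴴ * diagonal (fun i => (d i : ℂ)) * X).det := by
  have hgram := det_conjTranspose_mul_diagonal_mul X 1
  simp only [Pi.one_apply, Complex.ofReal_one, diagonal_one, Matrix.mul_one,
    Finset.prod_const_one, one_mul] at hgram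
  rw [hgram, det_conjTranspose_mul_diagonal_mul, ← Complex.ofReal_prod, ← Complex.ofReal_mul,
    Complex.real_le_real, Finset.mul_sum]
  refine Finset.sum_le_sum fun g _ => mul_le_mul_of_nonneg_right ?_ (Complex.normSq_nonneg _)
  exact Finset.prod_le_prod (fun t _ => hd₀ _) fun t _ => hd (g.2.val_le_val_apply t)

theorem prod_mul_det_le_det_conjTranspose_mul_diagonal_mul (hkn : k ≤ n)
    (X : Matrix (Fin n) (Fin k) ℂ) {d : Fin n → ℝ} (hd₀ : ∀ i, 0 ≤ d i) :
    (∏ t, ((d ∘ Tuple.sort d) (Fin.castLE hkn t) : ℂ)) * (Xᴴ * X).det ≤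
      (Xᴴ * diagonal (fun i => (d i : ℂ)) * X).det := by
  set σ := Tuple.sort d
  have hgram : (X.submatrix σ id)ᴴ * X.submatrix σ id = Xᴴ * X := by
    rw [conjTranspose_submatrix, submatrix_mul_equiv]
    rfl
  have hdiag : (X.submatrix σ id)ᴴ * diagonal (fun i => (d (σ i) : ℂ)) * X.submatrix σ id =
      Xᴴ * diagonal (fun i => (d i : ℂ)) * X := by
    rw [show (diagonal fun i => (d (σ i) : ℂ)) = (diagonal fun i => (d i : ℂ)).submatrix σ σ from
      (submatrix_diagonal_equiv (fun i => (d i : ℂ)) σ).symm, conjTranspose_submatrix,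
      submatrix_mul_equiv, submatrix_mul_equiv]
    rfl
  rw [← hgram, ← hdiag]
  exact prod_mul_det_le_det_conjTranspose_mul_diagonal_mul_of_monotone hkn
    (X.submatrix σ id) (fun i => hd₀ (σ i)) (Tuple.monotone_sort d)

theorem prod_mul_det_le_det_conjTranspose_mul_conj_diagonal_mul (hkn : k ≤ n)
    (W : Matrix (Fin n) (Fin k) ℂ) (U : unitaryGroup (Fin n) ℂ) {d : Fin n → ℝ}
    (hd₀ : ∀ i, 0 ≤ d i) :
    (∏ t, ((d ∘ Tuple.sort d) (Fin.castLE hkn t) : ℂ)) * (Wᴴ * W).det ≤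
      (Wᴴ * Unitary.conjStarAlgAut ℂ _ U (diagonal (RCLike.ofReal ∘ d)) * W).det := by
  set V : Matrix (Fin n) (Fin n) ℂ := ↑U
  have hVW : (star V * W)ᴴ = Wᴴ * V := by
    rw [conjTranspose_mul, star_eq_conjTranspose, conjTranspose_conjTranspose]
  have hgram : (star V * W)ᴴ * (star V * W) = Wᴴ * W := by
    rw [hVW, Matrix.mul_assoc, ← Matrix.mul_assoc V, mem_unitaryGroup_iff.1 U.2, Matrix.one_mul]
  have hdiag : (star V * W)ᴴ * diagonal (fun i => (d i : ℂ)) * (star V * W) =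
      Wᴴ * Unitary.conjStarAlgAut ℂ _ U (diagonal (RCLike.ofReal ∘ d)) * W := by
    rw [hVW, Unitary.conjStarAlgAut_apply]
    simp only [Matrix.mul_assoc]
    rfl
  rw [← hgram, ← hdiag]
  exact prod_mul_det_le_det_conjTranspose_mul_diagonal_mul hkn (star V * W) hd₀

end GramDeterminant

section Hermitian

variable {𝕜 ι : Type*} [RCLike 𝕜] [Fintype ι] [DecidableEq ι] {X : Matrix ι ι 𝕜}

theorem Matrix.IsHermitian.eigenvalues_lt_one (hX : X.IsHermitian) (h : (1 - X).PosDef)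
    (i : ι) : hX.eigenvalues i < 1 := by
  have hmem : 1 - hX.eigenvalues i ∈ spectrum ℝ (1 - X) := by
    rw [← map_one (algebraMap ℝ (Matrix ι ι 𝕜)), ← spectrum.singleton_sub_eq]
    exact Set.sub_mem_sub rfl (hX.eigenvalues_mem_spectrum_real i)
  rw [h.1.spectrum_real_eq_range_eigenvalues] at hmem
  obtain ⟨j, hj⟩ := hmem
  linarith [h.eigenvalues_pos j]

theorem Matrix.IsHermitian.inv_one_sub_eq (hX : X.IsHermitian)
    (h : ∀ i, hX.eigenvalues i ≠ 1) :
    (1 - X)⁻¹ = Unitary.conjStarAlgAut 𝕜 _ hX.eigenvectorUnitary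
      (diagonal (RCLike.ofReal ∘ (fun x => (1 - x)⁻¹) ∘ hX.eigenvalues)) := by
  set Φ := Unitary.conjStarAlgAut 𝕜 (Matrix ι ι 𝕜) hX.eigenvectorUnitary
  have hsub : 1 - X = Φ (diagonal (RCLike.ofReal ∘ fun i => 1 - hX.eigenvalues i)) := by
    conv_lhs => rw [hX.spectral_theorem]
    rw [← map_one Φ, ← map_sub, ← diagonal_one, diagonal_sub]
    congr 2
    ext i
    simp
  refine inv_eq_left_inv ?_
  rw [hsub, ← map_mul, diagonal_mul_diagonal, ← map_one Φ, ← diagonal_one]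
  congr 2
  ext i
  simp only [Function.comp_apply, RCLike.ofReal_inv, RCLike.ofReal_sub, RCLike.ofReal_one]
  refine inv_mul_cancel₀ (sub_ne_zero.2 fun he => h i ?_)
  exact_mod_cast he.symm

end Hermitian

variable {n : ℕ}

theorem eigval_rev_eq {X : Matrix (Fin n) (Fin n) ℂ} (hX : X.IsHermitian) (j : Fin n) :
    eigval X j.rev = (hX.eigenvalues ∘ Tuple.sort hX.eigenvalues) j := by
  rw [eigval, dif_pos hX, Fin.rev_rev]
  rfl

theorem eigval_nonneg {X : Matrix (Fin n) (Fin n) ℂ} (hX : X.PosSemidef) (t : Fin n) :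
    0 ≤ eigval X t := by
  rw [← Fin.rev_rev t, eigval_rev_eq hX.1]
  exact hX.eigenvalues_nonneg _

theorem exists_isometry_conj_eq_diagonal_eigval {k : ℕ} (hkn : k ≤ n)
    {X : Matrix (Fin n) (Fin n) ℂ} (hX : X.IsHermitian) :
    ∃ Q : Matrix (Fin n) (Fin k) ℂ, Qᴴ * Q = 1 ∧
      Qᴴ * X * Q = diagonal fun t => (eigval X (Fin.castLE hkn t).rev : ℂ) := by
  set U : Matrix (Fin n) (Fin n) ℂ := ↑hX.eigenvectorUnitary
  set m := Tuple.sort hX.eigenvalues ∘ Fin.castLE hkn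
  have hm : m.Injective := (Tuple.sort _).injective.comp (Fin.castLE_injective hkn)
  have hconj : ∀ Y : Matrix (Fin n) (Fin n) ℂ,
      (U.submatrix id m)ᴴ * Y * U.submatrix id m = (star U * Y * U).submatrix m m := by
    intro Y
    ext i j
    simp [mul_apply]
  refine ⟨U.submatrix id m, ?_, ?_⟩
  · rw [← Matrix.mul_one (U.submatrix id m)ᴴ, hconj, Matrix.mul_one,
      Unitary.coe_star_mul_self, submatrix_one _ hm]
  · have hdiag : star U * X * U = diagonal (RCLike.ofReal ∘ hX.eigenvalues) := by
      simpa using hX.conjStarAlgAut_star_eigenvectorUnitary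
    rw [hconj, hdiag, submatrix_diagonal _ _ hm]
    congr 1
    ext t
    simp [m, eigval_rev_eq hX]

theorem prod_eigval_mul_le_prod_eigval_conjTranspose_mul_mul {k : ℕ} (hkn : k ≤ n)
    (C : Matrix (Fin n) (Fin n) ℂ) (U : unitaryGroup (Fin n) ℂ) {d : Fin n → ℝ}
    (hd₀ : ∀ i, 0 ≤ d i) :
    ∏ t, eigval (Cᴴ * C) (Fin.castLE hkn t).rev * (d ∘ Tuple.sort d) (Fin.castLE hkn t) ≤
      ∏ t, eigval (Cᴴ * Unitary.conjStarAlgAut ℂ _ U (diagonal (RCLike.ofReal ∘ d)) * C)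
        (Fin.castLE hkn t).rev := by
  set P := Unitary.conjStarAlgAut ℂ _ U (diagonal (RCLike.ofReal ∘ d))
  set dₖ := ∏ t, ((d ∘ Tuple.sort d) (Fin.castLE hkn t) : ℂ)
  have hD : (diagonal (RCLike.ofReal ∘ d) : Matrix (Fin n) (Fin n) ℂ).IsHermitian :=
    isHermitian_diagonal_of_self_adjoint _ (by ext; simp)
  have hP : P.IsHermitian := hD.isSelfAdjoint.map (Unitary.conjStarAlgAut ℂ _ U)
  obtain ⟨Q, hQ, hQH⟩ :=
    exists_isometry_conj_eq_diagonal_eigval hkn (isHermitian_conjTranspose_mul_mul C hP)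
  have hCC := posSemidef_conjTranspose_mul_self C
  have hgram : ∏ t, (eigval (Cᴴ * C) (Fin.castLE hkn t).rev : ℂ) ≤ (Qᴴ * (Cᴴ * C) * Q).det := by
    have h := prod_mul_det_le_det_conjTranspose_mul_conj_diagonal_mul hkn Q
      hCC.1.eigenvectorUnitary hCC.eigenvalues_nonneg
    simpa only [hQ, det_one, mul_one, ← hCC.1.spectral_theorem, ← eigval_rev_eq hCC.1] using h
  have hdₖ : 0 ≤ dₖ := Finset.prod_nonneg fun t _ => Complex.zero_le_real.2 (hd₀ _)
  rw [← Complex.real_le_real]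
  calc ((∏ t, eigval (Cᴴ * C) (Fin.castLE hkn t).rev * (d ∘ Tuple.sort d) (Fin.castLE hkn t) :
        ℝ) : ℂ)
      = (∏ t, (eigval (Cᴴ * C) (Fin.castLE hkn t).rev : ℂ)) * dₖ := by
        push_cast
        rw [Finset.prod_mul_distrib]
    _ ≤ (Qᴴ * (Cᴴ * C) * Q).det * dₖ := mul_le_mul_of_nonneg_right hgram hdₖ
    _ = dₖ * ((C * Q)ᴴ * (C * Q)).det := by
        rw [mul_comm, conjTranspose_mul]
        simp only [Matrix.mul_assoc]
    _ ≤ ((C * Q)ᴴ * P * (C * Q)).det :=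
        prod_mul_det_le_det_conjTranspose_mul_conj_diagonal_mul hkn (C * Q) U hd₀
    _ = (Qᴴ * (Cᴴ * P * C) * Q).det := by
        rw [conjTranspose_mul]
        simp only [Matrix.mul_assoc]
    _ = ((∏ t, eigval (Cᴴ * P * C) (Fin.castLE hkn t).rev : ℝ) : ℂ) := by
        rw [hQH, det_diagonal]
        push_cast
        rfl

theorem prod_smallest_eig_H_ge_general (n k : ℕ) (hkn : k ≤ n)
    (A B : Matrix (Fin n) (Fin n) ℂ) (hA : (1 - Aᴴ * A).PosDef)
    (H : Matrix (Fin n) (Fin n) ℂ)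
    (hH : H = (A - B)ᴴ * (1 - A * Aᴴ)⁻¹ * (A - B)) :
    ∏ t : Fin k, eigval H ((Fin.castLE hkn t).rev) ≥
      ∏ t : Fin k, singval (A - B) ((Fin.castLE hkn t).rev) ^ 2 /
        (1 - eigval (Aᴴ * A) ((Fin.castLE hkn t).rev)) := by
  have h₁ := isHermitian_conjTranspose_mul_self A
  have h₂ := isHermitian_mul_conjTranspose_self A
  have hμ : h₂.eigenvalues = h₁.eigenvalues :=
    (h₂.eigenvalues_eq_eigenvalues_iff h₁).2 (charpoly_mul_comm _ _)
  have hlt : ∀ i, h₂.eigenvalues i < 1 := fun i => hμ ▸ h₁.eigenvalues_lt_one hA i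
  set φ : ℝ → ℝ := fun x => (1 - x)⁻¹
  have hd₀ : ∀ i, 0 ≤ (φ ∘ h₂.eigenvalues) i := fun i => inv_nonneg.2 (sub_nonneg.2 (hlt i).le)
  have hsort : (φ ∘ h₂.eigenvalues) ∘ Tuple.sort (φ ∘ h₂.eigenvalues)
      = fun j => (1 - eigval (Aᴴ * A) j.rev)⁻¹ := by
    rw [Tuple.comp_comp_sort_of_monotoneOn ?_, hμ]
    · ext j
      simp [φ, eigval_rev_eq h₁]
    · rintro _ ⟨i, rfl⟩ _ ⟨j, rfl⟩ hij
      exact inv_anti₀ (sub_pos.2 (hlt j)) (by linarith)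
  have key := prod_eigval_mul_le_prod_eigval_conjTranspose_mul_mul hkn (A - B)
    h₂.eigenvectorUnitary hd₀
  rw [← h₂.inv_one_sub_eq fun i => (hlt i).ne, ← hH, hsort] at key
  refine le_of_eq_of_le (Finset.prod_congr rfl fun t _ => ?_) key
  rw [singval, Real.sq_sqrt (eigval_nonneg (posSemidef_conjTranspose_mul_self _) _),
    div_eq_mul_inv]

theorem prod_smallest_eig_H_ge (n k : ℕ) (hn : 0 < n) (hk : 0 < k) (hkn : k ≤ n)
    (A B : Matrix (Fin n) (Fin n) ℂ) (hA : (1 - Aᴴ * A).PosDef)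
    (H : Matrix (Fin n) (Fin n) ℂ)
    (hH : H = (A - B)ᴴ * (1 - A * Aᴴ)⁻¹ * (A - B)) :
    ∏ t : Fin k, eigval H ((Fin.castLE hkn t).rev) ≥
      ∏ t : Fin k, singval (A - B) ((Fin.castLE hkn t).rev) ^ 2 /
        (1 - eigval (Aᴴ * A) ((Fin.castLE hkn t).rev)) :=
  prod_smallest_eig_H_ge_general n k hkn A B hA H hH
end
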